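/- arXiv:2306.11470 — 6 statements merged into one kernel-verified Lean document; each statement's English description precedes it below -/
import Mathlib

section
/- Let J° = (l, r) be an open interval with l finite, and let β : J° → ℝ be a Borel function with β² locally integrable on J°. Define the scale function s(x) = ∫_c^x exp(∫_c^y β(z) dz) dy for some fixed c ∈ J°. If s(l) := lim_{x→l+} s(x) = -∞, then for every ε > 0 with l+ε ∈ J° one has ∫_l^{l+ε} (x - l)·β(x)² dx = ∞. -/
open MeasureTheory Set Filter

/-!
If `∫_l^{l+ε} (x - l) β(x)² dx = K < ∞`, then AM-GM, `|β| ≤ ((z - l)⁻¹ + (z - l) β²) / 2`,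
gives `∫_y^m |β| ≤ (log (m - l) - log (y - l) + K) / 2` near `l`. Hence the density
`exp (∫_c^y β)` of the scale function is `O((y - l)^(-1/2))`, which is integrable at `l`,
so `s` stays bounded below near `l`.
-/

open Real Topology intervalIntegral

lemma integrableOn_Icc_of_integrableOn_sq {β : ℝ → ℝ} {a b : ℝ}
    (hβ : AEStronglyMeasurable β) (h : IntegrableOn (fun x => β x ^ 2) (Icc a b)) :
    IntegrableOn β (Icc a b) :=
  ((memLp_two_iff_integrable_sq hβ.restrict).2 h).integrable one_le_two

lemma intervalIntegrable_of_integrableOn_Icc {f : ℝ → ℝ} {l r : ℝ}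
    (h : ∀ a b, l < a → a ≤ b → b < r → IntegrableOn f (Icc a b))
    {a b : ℝ} (ha : a ∈ Ioo l r) (hb : b ∈ Ioo l r) : IntervalIntegrable f volume a b :=
  (h _ _ (lt_min ha.1 hb.1) min_le_max (max_lt ha.2 hb.2)).intervalIntegrable

lemma continuousOn_primitive_Ioo {f : ℝ → ℝ} {l r c : ℝ} (hc : c ∈ Ioo l r)
    (hf : ∀ a ∈ Ioo l r, ∀ b ∈ Ioo l r, IntervalIntegrable f volume a b) :
    ContinuousOn (fun x => ∫ t in c..x, f t) (Ioo l r) := by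
  intro y hy
  obtain ⟨a, hla, hay⟩ := exists_between (lt_min hc.1 hy.1)
  obtain ⟨b, hyb, hbr⟩ := exists_between (max_lt hc.2 hy.2)
  have hyab : y ∈ Ioo a b :=
    ⟨hay.trans_le (min_le_right _ _), (le_max_right _ _).trans_lt hyb⟩
  have hcab : c ∈ uIcc a b := by
    rw [uIcc_of_le (hyab.1.trans hyab.2).le]
    exact ⟨(hay.trans_le (min_le_left _ _)).le, ((le_max_left _ _).trans_lt hyb).le⟩
  have hprim := continuousOn_primitive_interval'
    (hf a ⟨hla, hay.trans (min_le_right _ _ |>.trans_lt hy.2)⟩ b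
      ⟨hy.1.trans ((le_max_right _ _).trans_lt hyb), hbr⟩) hcab
  rw [uIcc_of_le (hyab.1.trans hyab.2).le] at hprim
  exact (hprim.continuousAt (Icc_mem_nhds hyab.1 hyab.2)).continuousWithinAt

lemma abs_le_inv_add_mul_sq {t : ℝ} (ht : 0 < t) (b : ℝ) : |b| ≤ (t⁻¹ + t * b ^ 2) / 2 := by
  have h : 2 * t * |b| ≤ 1 + t ^ 2 * b ^ 2 := by
    nlinarith [sq_nonneg (t * |b| - 1), sq_abs b]
  rw [inv_eq_one_div, div_add' _ _ _ ht.ne', div_div, le_div_iff₀ (by positivity)]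
  nlinarith

lemma abs_integral_le_log_sub_log_add {β : ℝ → ℝ} {l y m : ℝ} (hly : l < y) (hym : y ≤ m)
    (hβ : IntervalIntegrable β volume y m)
    (hβ2 : IntervalIntegrable (fun z => β z ^ 2) volume y m) :
    |∫ z in y..m, β z| ≤ (log (m - l) - log (y - l) + ∫ z in y..m, (z - l) * β z ^ 2) / 2 := by
  have hinv : IntervalIntegrable (fun z => (z - l)⁻¹) volume y m := by
    refine ContinuousOn.intervalIntegrable ((continuousOn_id.sub continuousOn_const).inv₀
      fun z hz => ?_)
    rw [uIcc_of_le hym] at hz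
    exact sub_ne_zero.2 (hly.trans_le hz.1).ne'
  have hweighted : IntervalIntegrable (fun z => (z - l) * β z ^ 2) volume y m :=
    hβ2.continuousOn_mul (continuousOn_id.sub continuousOn_const)
  have hlog : ∫ z in y..m, (z - l)⁻¹ = log (m - l) - log (y - l) := by
    rw [integral_comp_sub_right (fun u => u⁻¹), integral_inv_of_pos (by linarith) (by linarith),
      log_div (by linarith) (by linarith)]
  calc |∫ z in y..m, β z| ≤ ∫ z in y..m, |β z| := abs_integral_le_integral_abs hym
    _ ≤ ∫ z in y..m, ((z - l)⁻¹ + (z - l) * β z ^ 2) / 2 :=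
      integral_mono_on hym hβ.abs ((hinv.add hweighted).div_const 2) fun z hz =>
        abs_le_inv_add_mul_sq (by linarith [hz.1]) _
    _ = _ := by rw [intervalIntegral.integral_div, integral_add hinv hweighted, hlog]

lemma primitive_le_sub_half_log {β : ℝ → ℝ} {l m c K : ℝ} (hlm : l < m)
    (hβ : ∀ y ∈ Ioc l m, IntervalIntegrable β volume c y)
    (hβ2 : ∀ y ∈ Ioc l m, IntervalIntegrable (fun z => β z ^ 2) volume y m)
    (hK : ∀ y ∈ Ioc l m, ∫ z in y..m, (z - l) * β z ^ 2 ≤ K) (y : ℝ) (hy : y ∈ Ioc l m) :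
    ∫ z in c..y, β z ≤ (∫ z in c..m, β z) + K / 2 + log (m - l) / 2 - log (y - l) / 2 := by
  have hm : m ∈ Ioc l m := ⟨hlm, le_rfl⟩
  have hdiff : (∫ z in c..m, β z) - ∫ z in c..y, β z = ∫ z in y..m, β z :=
    integral_interval_sub_left (hβ m hm) (hβ y hy)
  have hAMGM := abs_integral_le_log_sub_log_add hy.1 hy.2 ((hβ y hy).symm.trans (hβ m hm))
    (hβ2 y hy)
  linarith [neg_abs_le (∫ z in y..m, β z), hK y hy]

lemma setIntegral_le_toReal_setLIntegral {α : Type*} [MeasurableSpace α] {μ : Measure α}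
    {f : α → ℝ} {s t : Set α} (hst : s ⊆ t) (hf : 0 ≤ᵐ[μ.restrict s] f)
    (hfm : AEStronglyMeasurable f (μ.restrict s))
    (ht : ∫⁻ x in t, ENNReal.ofReal (f x) ∂μ ≠ ⊤) :
    ∫ x in s, f x ∂μ ≤ (∫⁻ x in t, ENNReal.ofReal (f x) ∂μ).toReal := by
  rw [integral_eq_lintegral_of_nonneg_ae hf hfm]
  exact ENNReal.toReal_mono ht (lintegral_mono_set hst)

lemma integrableOn_Ioc_of_le_mul_rpow {f : ℝ → ℝ} {l m C p : ℝ} (hp : -1 < p)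
    (hf : ContinuousOn f (Ioc l m)) (hle : ∀ y ∈ Ioc l m, ‖f y‖ ≤ C * (y - l) ^ p) :
    IntegrableOn f (Ioc l m) := by
  have hg : IntervalIntegrable (fun y => C * (y - l) ^ p) volume l m := by
    simpa using
      ((intervalIntegrable_rpow' (a := 0) (b := m - l) hp).comp_sub_right l).const_mul C
  exact hg.1.mono' (hf.aestronglyMeasurable measurableSet_Ioc)
    (ae_restrict_of_forall_mem measurableSet_Ioc hle)

lemma integrableOn_exp_of_le_sub_half_log {f : ℝ → ℝ} {l m c A : ℝ} (hlm : l < m)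
    (hmc : m ≤ c) (hf : ContinuousOn f (Ioc l c)) (hle : ∀ y ∈ Ioc l m, f y ≤ A - log (y - l) / 2) :
    IntegrableOn (fun y => exp (f y)) (Ioc l c) := by
  have hexp : ContinuousOn (fun y => exp (f y)) (Ioc l c) := continuous_exp.comp_continuousOn hf
  have hnear : IntegrableOn (fun y => exp (f y)) (Ioc l m) := by
    refine integrableOn_Ioc_of_le_mul_rpow (C := exp A) (p := -(1 / 2)) (by norm_num)
      (hexp.mono (Ioc_subset_Ioc_right hmc)) fun y hy => ?_
    rw [norm_of_nonneg (exp_pos _).le, rpow_def_of_pos (sub_pos.2 hy.1), ← exp_add]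
    exact exp_le_exp.2 (by linarith [hle y hy])
  rw [← Ioc_union_Ioc_eq_Ioc hlm.le hmc]
  exact hnear.union ((hexp.mono (Icc_subset_Ioc hlm le_rfl)).integrableOn_Icc.mono_set
    Ioc_subset_Icc_self)

lemma not_tendsto_atBot_of_integrableOn {f s : ℝ → ℝ} {l c : ℝ} (hlc : l < c)
    (hf0 : ∀ y ∈ Ioc l c, 0 ≤ f y) (hf : IntegrableOn f (Ioc l c))
    (hs : ∀ x ∈ Ioo l c, s x = ∫ y in c..x, f y) : ¬Tendsto s (𝓝[>] l) atBot := by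
  intro hlim
  have hbound : ∀ x ∈ Ioo l c, -∫ y in Ioc l c, f y ≤ s x := by
    intro x hx
    rw [hs x hx, integral_symm, integral_of_le hx.2.le, neg_le_neg_iff]
    exact setIntegral_mono_set hf (ae_restrict_of_forall_mem measurableSet_Ioc hf0)
      (Ioc_subset_Ioc_left hx.1.le).eventuallyLE
  obtain ⟨x, hsx, hx⟩ := ((hlim.eventually (eventually_lt_atBot _)).and
    (Ioo_mem_nhdsGT hlc)).exists
  exact (hsx.trans_le (hbound x hx)).false

theorem stmt0_general (l r c : ℝ) (hc : c ∈ Ioo l r)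
    (β : ℝ → ℝ) (hβ : Measurable β)
    (hloc : ∀ a b : ℝ, l < a → a ≤ b → b < r →
      IntegrableOn (fun x => (β x) ^ 2) (Icc a b) volume)
    (s : ℝ → ℝ)
    (hs : ∀ x ∈ Ioo l r, s x = ∫ y in c..x, Real.exp (∫ z in c..y, β z))
    (hsl : Tendsto s (nhdsWithin l (Ioi l)) atBot) :
    ∀ ε > (0:ℝ), l + ε < r →
      ∫⁻ x in Ioo l (l + ε), ENNReal.ofReal ((x - l) * (β x) ^ 2) = ⊤ := by
  intro ε hε _
  by_contra hfin
  obtain ⟨m, hlm, hm⟩ := exists_between (lt_min hc.1 (lt_add_of_pos_right l hε))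
  obtain ⟨hmc, hmε⟩ := lt_min_iff.1 hm
  have hIoc : Ioc l m ⊆ Ioo l r := Ioc_subset_Ioo_right (hmc.trans hc.2)
  have hβ1 : ∀ a ∈ Ioo l r, ∀ b ∈ Ioo l r, IntervalIntegrable β volume a b :=
    fun a ha b hb => intervalIntegrable_of_integrableOn_Icc (fun a b ha hab hb =>
      integrableOn_Icc_of_integrableOn_sq hβ.aestronglyMeasurable (hloc a b ha hab hb)) ha hb
  have hK : ∀ y ∈ Ioc l m, ∫ z in y..m, (z - l) * β z ^ 2 ≤
      (∫⁻ x in Ioo l (l + ε), ENNReal.ofReal ((x - l) * (β x) ^ 2)).toReal := by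
    rintro y ⟨hly, hym⟩
    rw [integral_of_le hym]
    refine setIntegral_le_toReal_setLIntegral (Ioc_subset_Ioo hly.le hmε) ?_
      ((measurable_id.sub_const l).mul (hβ.pow_const 2)).aestronglyMeasurable hfin
    exact ae_restrict_of_forall_mem measurableSet_Ioc fun z hz =>
      mul_nonneg (sub_nonneg.2 (hly.trans hz.1).le) (sq_nonneg _)
  have hF := primitive_le_sub_half_log hlm (fun y hy => hβ1 c hc y (hIoc hy))
    (fun y hy => intervalIntegrable_of_integrableOn_Icc hloc (hIoc hy) (hIoc ⟨hlm, le_rfl⟩)) hK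
  have hint := integrableOn_exp_of_le_sub_half_log hlm hmc.le
    ((continuousOn_primitive_Ioo hc hβ1).mono (Ioc_subset_Ioo_right hc.2)) hF
  exact not_tendsto_atBot_of_integrableOn hc.1 (fun y _ => (exp_pos _).le) hint
    (fun x hx => hs x ⟨hx.1, hx.2.trans hc.2⟩) hsl

/-- If the scale function `s(x) = ∫_c^x exp(∫_c^y β(z) dz) dy` on `J° = (l, r)`
(with `β²` locally integrable) satisfies `s(l) = -∞`, then for every `ε > 0` with `l + ε ∈ J°`,
`∫_l^{l+ε} (x - l)·β(x)² dx = ∞`. -/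
theorem stmt0 (l r c : ℝ) (hlr : l < r) (hc : c ∈ Ioo l r)
    (β : ℝ → ℝ) (hβ : Measurable β)
    (hloc : ∀ a b : ℝ, l < a → a ≤ b → b < r →
      IntegrableOn (fun x => (β x) ^ 2) (Icc a b) volume)
    (s : ℝ → ℝ)
    (hs : ∀ x ∈ Ioo l r, s x = ∫ y in c..x, Real.exp (∫ z in c..y, β z))
    (hsl : Tendsto s (nhdsWithin l (Ioi l)) atBot) :
    ∀ ε > (0:ℝ), l + ε < r →
      ∫⁻ x in Ioo l (l + ε), ENNReal.ofReal ((x - l) * (β x) ^ 2) = ⊤ :=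
  stmt0_general l r c hc β hβ hloc s hs hsl
end

section
/- Let J° = (l, r) with l finite, β : J° → ℝ Borel with β² locally integrable, and s(x) = ∫_c^x exp(∫_c^y β(z) dz) dy. Suppose s(l) > -∞. Then for any ε > 0 with l+ε ∈ J°, the condition ∫_l^{l+ε} (s(x) - s(l))·β(x)²/s'(x) dx < ∞ holds if and only if ∫_l^{l+ε} (x - l)·β(x)² dx < ∞. -/
/-!
Put `ρ = s' = exp (∫_c β)` and `Φ = s - s(l)`, a primitive of `ρ` vanishing at `l`. Both
integrands have the form `Ψ β² / ψ` for a primitive `Ψ` of a positive density `ψ` vanishing at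
`l`: `(Φ, ρ)` and `(x - l, 1)`, and the ratio of the two densities is `exp (± ∫ β)`.
If `K = ∫ Ψ β² / ψ < ∞`, the AM-GM inequality `2 |β| ≤ Ψ β² / ψ + ψ / Ψ` gives
`|∫_y^x β| ≤ (K + log (Ψ x / Ψ y)) / 2`, so the other pair `(Θ, θ)` satisfies
`θ y / ψ y ≤ exp (K / 2) √(Ψ x / Ψ y) θ x / ψ x` for `y < x`. Integrating in `y` over `(l, x)`,
with `∫_l^x ψ / √Ψ = 2 √(Ψ x)`, yields `Θ x / θ x ≤ 2 exp (K / 2) Ψ x / ψ x`, whence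
`∫ Θ β² / θ ≤ 2 exp (K / 2) K`.
-/

open MeasureTheory Set Filter Topology

theorem integrableOn_of_integrableOn_sq {α : Type*} [MeasurableSpace α] {μ : Measure α}
    {f : α → ℝ} {s : Set α} (hs : μ s ≠ ⊤) (hf : AEStronglyMeasurable f (μ.restrict s))
    (hf2 : IntegrableOn (fun x => f x ^ 2) s μ) : IntegrableOn f s μ :=
  have : IsFiniteMeasure (μ.restrict s) := isFiniteMeasure_restrict.mpr hs
  ((memLp_two_iff_integrable_sq hf).mpr hf2).integrable one_le_two

theorem lintegral_Ioo_ofReal_eq_sub_of_tendsto {F f : ℝ → ℝ} {l x F₀ : ℝ} (hlx : l < x)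
    (hF : ∀ t ∈ Ioc l x, HasDerivAt F (f t) t) (hf : ∀ t ∈ Ioo l x, 0 ≤ f t)
    (hF₀ : Tendsto F (𝓝[>] l) (𝓝 F₀)) :
    ∫⁻ t in Ioo l x, ENNReal.ofReal (f t) = ENNReal.ofReal (F x - F₀) := by
  classical
  -- `F` extended continuously to `l`, so that the FTC on `[l, x]` applies
  set G := Function.update F l F₀
  have hGF : ∀ t ≠ l, G =ᶠ[𝓝 t] F := fun t ht =>
    (eventually_ne_nhds ht).mono fun u hu => Function.update_of_ne hu _ _
  have hG : ContinuousOn G (Icc l x) := by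
    intro t ht
    rcases eq_or_lt_of_le ht.1 with rfl | hlt
    · exact continuousWithinAt_update_same.mpr
        (hF₀.mono_left (nhdsWithin_mono _ fun u hu => lt_of_le_of_ne hu.1.1 (Ne.symm hu.2)))
    · exact ((hF t ⟨hlt, ht.2⟩).continuousAt.congr (hGF t hlt.ne').symm).continuousWithinAt
  have hG' : ∀ t ∈ Ioo l x, HasDerivAt G (f t) t := fun t ht =>
    (hF t (Ioo_subset_Ioc_self ht)).congr_of_eventuallyEq (hGF t ht.1.ne')
  have hint : IntegrableOn f (Ioc l x) := intervalIntegral.integrableOn_deriv_of_nonneg hG hG' hf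
  have hFTC := intervalIntegral.integral_eq_sub_of_hasDerivAt_of_le hlx.le hG hG'
    ((intervalIntegrable_iff_integrableOn_Ioc_of_le hlx.le).mpr hint)
  rw [intervalIntegral.integral_of_le hlx.le, integral_Ioc_eq_integral_Ioo] at hFTC
  simp only [G, Function.update_of_ne hlx.ne', Function.update_self] at hFTC
  rw [← hFTC, ofReal_integral_eq_lintegral_ofReal (hint.mono_set Ioo_subset_Ioc_self)
    (ae_restrict_of_forall_mem measurableSet_Ioo hf)]

theorem abs_le_mul_sq_add_inv_div_two {a : ℝ} (ha : 0 < a) (t : ℝ) :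
    |t| ≤ (a * t ^ 2 + a⁻¹) / 2 := by
  have hmul : 2 * |t| * a ≤ a * t ^ 2 * a + 1 := by
    have hsq : (a * |t|) ^ 2 = a * t ^ 2 * a := by rw [mul_pow, sq_abs]; ring
    nlinarith [sq_nonneg (a * |t| - 1)]
  rw [le_div_iff₀ two_pos, ← mul_le_mul_iff_of_pos_right ha, add_mul, inv_mul_cancel₀ ha.ne']
  linarith

theorem abs_intervalIntegral_le_half_add_log {Ψ ψ β : ℝ → ℝ} {y x K : ℝ} (hyx : y ≤ x)
    (hK0 : 0 ≤ K) (hΨ : ∀ z ∈ Icc y x, HasDerivAt Ψ (ψ z) z) (hψ : ContinuousOn ψ (Icc y x))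
    (hψpos : ∀ z ∈ Icc y x, 0 < ψ z) (hΨpos : ∀ z ∈ Icc y x, 0 < Ψ z)
    (hβ : IntervalIntegrable β volume y x) (hβ2 : IntegrableOn (fun z => β z ^ 2) (Icc y x))
    (hK : ∫⁻ z in Ioc y x, ENNReal.ofReal (Ψ z * β z ^ 2 / ψ z) ≤ ENNReal.ofReal K) :
    |∫ z in y..x, β z| ≤ (K + (Real.log (Ψ x) - Real.log (Ψ y))) / 2 := by
  have hΨc : ContinuousOn Ψ (Icc y x) := fun z hz => (hΨ z hz).continuousAt.continuousWithinAt
  have hψΨ : IntervalIntegrable (fun z => ψ z / Ψ z) volume y x :=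
    (hψ.div hΨc fun z hz => (hΨpos z hz).ne').intervalIntegrable_of_Icc hyx
  have hlog : ∫ z in y..x, ψ z / Ψ z = Real.log (Ψ x) - Real.log (Ψ y) := by
    refine intervalIntegral.integral_eq_sub_of_hasDerivAt (f := fun z => Real.log (Ψ z))
      (fun z hz => ?_) hψΨ
    rw [uIcc_of_le hyx] at hz
    exact (hΨ z hz).log (hΨpos z hz).ne'
  have hweighted : IntegrableOn (fun z => Ψ z * β z ^ 2 / ψ z) (Icc y x) := by
    refine (hβ2.continuousOn_mul (hΨc.div hψ fun z hz => (hψpos z hz).ne')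
      isCompact_Icc).congr_fun (fun z _ => ?_) measurableSet_Icc
    simp only [Pi.div_apply]
    ring
  have hweighted_le : ∫ z in y..x, Ψ z * β z ^ 2 / ψ z ≤ K := by
    rw [intervalIntegral.integral_of_le hyx, ← ENNReal.ofReal_le_ofReal_iff hK0,
      ofReal_integral_eq_lintegral_ofReal (hweighted.mono_set Ioc_subset_Icc_self)]
    · exact hK
    · refine ae_restrict_of_forall_mem measurableSet_Ioc fun z hz => ?_
      have := hψpos z (Ioc_subset_Icc_self hz)
      have := hΨpos z (Ioc_subset_Icc_self hz)
      positivity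
  have hamgm : ∀ z ∈ Icc y x, |β z| ≤ (Ψ z * β z ^ 2 / ψ z + ψ z / Ψ z) / 2 := fun z hz => by
    simpa only [inv_div, mul_comm (Ψ z / ψ z), mul_div_right_comm] using
      abs_le_mul_sq_add_inv_div_two (div_pos (hΨpos z hz) (hψpos z hz)) (β z)
  have hweighted' := (intervalIntegrable_iff_integrableOn_Icc_of_le hyx).mpr hweighted
  calc |∫ z in y..x, β z| ≤ ∫ z in y..x, |β z| := intervalIntegral.abs_integral_le_integral_abs hyx
    _ ≤ ∫ z in y..x, (Ψ z * β z ^ 2 / ψ z + ψ z / Ψ z) / 2 :=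
      intervalIntegral.integral_mono_on hyx hβ.abs ((hweighted'.add hψΨ).div_const 2) hamgm
    _ ≤ (K + (Real.log (Ψ x) - Real.log (Ψ y))) / 2 := by
      rw [intervalIntegral.integral_div, intervalIntegral.integral_add hweighted' hψΨ, hlog]
      linarith

structure VanishingPrimitiveOn (l b : ℝ) (Ψ ψ : ℝ → ℝ) : Prop where
  hasDerivAt : ∀ t ∈ Ioo l b, HasDerivAt Ψ (ψ t) t
  continuousOn : ContinuousOn ψ (Ioo l b)
  pos : ∀ t ∈ Ioo l b, 0 < ψ t
  tendsto : Tendsto Ψ (𝓝[>] l) (𝓝 0)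

namespace VanishingPrimitiveOn

variable {l b : ℝ} {Ψ ψ : ℝ → ℝ}

theorem lintegral_eq (h : VanishingPrimitiveOn l b Ψ ψ) {x : ℝ} (hx : x ∈ Ioo l b) :
    ∫⁻ t in Ioo l x, ENNReal.ofReal (ψ t) = ENNReal.ofReal (Ψ x) := by
  simpa only [sub_zero] using lintegral_Ioo_ofReal_eq_sub_of_tendsto hx.1
    (fun t ht => h.hasDerivAt t ⟨ht.1, ht.2.trans_lt hx.2⟩)
    (fun t ht => (h.pos t ⟨ht.1, ht.2.trans hx.2⟩).le) h.tendsto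

theorem primitive_pos (h : VanishingPrimitiveOn l b Ψ ψ) {x : ℝ} (hx : x ∈ Ioo l b) :
    0 < Ψ x := by
  have hmono : StrictMonoOn Ψ (Ioo l b) := by
    refine strictMonoOn_of_deriv_pos (convex_Ioo l b)
      (fun t ht => (h.hasDerivAt t ht).continuousAt.continuousWithinAt) fun t ht => ?_
    rw [interior_Ioo] at ht
    rw [(h.hasDerivAt t ht).deriv]
    exact h.pos t ht
  obtain ⟨m, hlm, hmx⟩ := exists_between hx.1
  have hm : m ∈ Ioo l b := ⟨hlm, hmx.trans hx.2⟩
  have hΨm : 0 ≤ Ψ m := le_of_tendsto h.tendsto <| eventually_of_mem (Ioo_mem_nhdsGT hlm)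
    fun t ht => (hmono ⟨ht.1, ht.2.trans hm.2⟩ hm ht.2).le
  exact hΨm.trans_lt (hmono hm hx hmx)

theorem lintegral_div_sqrt_eq (h : VanishingPrimitiveOn l b Ψ ψ) {x : ℝ} (hx : x ∈ Ioo l b) :
    ∫⁻ t in Ioo l x, ENNReal.ofReal (ψ t / √(Ψ t)) = ENNReal.ofReal (2 * √(Ψ x)) := by
  have hIoc : ∀ t ∈ Ioc l x, t ∈ Ioo l b := fun t ht => ⟨ht.1, ht.2.trans_lt hx.2⟩
  have hderiv : ∀ t ∈ Ioc l x, HasDerivAt (fun u => 2 * √(Ψ u)) (ψ t / √(Ψ t)) t := by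
    intro t ht
    have hΨt := h.primitive_pos (hIoc t ht)
    refine (((h.hasDerivAt t (hIoc t ht)).sqrt hΨt.ne').const_mul 2).congr_deriv ?_
    rw [← mul_div_assoc, mul_div_mul_left _ _ two_ne_zero]
  have hlim : Tendsto (fun u => 2 * √(Ψ u)) (𝓝[>] l) (𝓝 0) := by
    simpa only [Real.sqrt_zero, mul_zero, Function.comp_def] using
      ((Real.continuous_sqrt.tendsto 0).comp h.tendsto).const_mul 2
  simpa only [sub_zero] using lintegral_Ioo_ofReal_eq_sub_of_tendsto hx.1 hderiv
    (fun t ht => div_nonneg (h.pos t (hIoc t (Ioo_subset_Ioc_self ht))).le (Real.sqrt_nonneg _))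
    hlim

theorem div_le_of_log_ratio_le {Θ θ : ℝ → ℝ} (hΨ : VanishingPrimitiveOn l b Ψ ψ)
    (hΘ : VanishingPrimitiveOn l b Θ θ) {x K : ℝ} (hx : x ∈ Ioo l b)
    (hratio : ∀ y ∈ Ioo l x, Real.log (θ y / ψ y) - Real.log (θ x / ψ x) ≤
      K / 2 + (Real.log (Ψ x) - Real.log (Ψ y)) / 2) :
    Θ x / θ x ≤ 2 * Real.exp (K / 2) * (Ψ x / ψ x) := by
  have hsub : Ioo l x ⊆ Ioo l b := Ioo_subset_Ioo_right hx.2.le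
  have hΨx := hΨ.primitive_pos hx
  have hψx := hΨ.pos x hx
  have hθx := hΘ.pos x hx
  set C := Real.exp (K / 2) * √(Ψ x) * (θ x / ψ x)
  have hC : 0 ≤ C := by positivity
  have hθ_le : ∀ y ∈ Ioo l x, θ y ≤ C * (ψ y / √(Ψ y)) := by
    intro y hy
    have hΨy := hΨ.primitive_pos (hsub hy)
    have hψy := hΨ.pos y (hsub hy)
    have hθy := hΘ.pos y (hsub hy)
    have hlog : Real.log (θ y / ψ y) ≤ Real.log (C / √(Ψ y)) := by
      rw [Real.log_div (x := C) (by positivity) (by positivity), Real.log_mul (by positivity)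
        (by positivity), Real.log_mul (by positivity) (by positivity), Real.log_exp,
        Real.log_sqrt hΨx.le, Real.log_sqrt hΨy.le]
      linarith [hratio y hy]
    have hdiv := (Real.log_le_log_iff (by positivity) (by positivity)).mp hlog
    calc θ y = θ y / ψ y * ψ y := (div_mul_cancel₀ _ hψy.ne').symm
      _ ≤ C / √(Ψ y) * ψ y := by gcongr
      _ = C * (ψ y / √(Ψ y)) := by ring
  have hΘx : ENNReal.ofReal (Θ x) ≤ ENNReal.ofReal (C * (2 * √(Ψ x))) :=
    calc ENNReal.ofReal (Θ x) = ∫⁻ t in Ioo l x, ENNReal.ofReal (θ t) := (hΘ.lintegral_eq hx).symm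
      _ ≤ ∫⁻ t in Ioo l x, ENNReal.ofReal C * ENNReal.ofReal (ψ t / √(Ψ t)) :=
        setLIntegral_mono' measurableSet_Ioo fun t ht => by
          rw [← ENNReal.ofReal_mul hC]
          exact ENNReal.ofReal_le_ofReal (hθ_le t ht)
      _ = ENNReal.ofReal C * ENNReal.ofReal (2 * √(Ψ x)) := by
        rw [lintegral_const_mul' _ _ ENNReal.ofReal_ne_top, hΨ.lintegral_div_sqrt_eq hx]
      _ = ENNReal.ofReal (C * (2 * √(Ψ x))) := (ENNReal.ofReal_mul hC).symm
  rw [div_le_iff₀ hθx]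
  calc Θ x ≤ C * (2 * √(Ψ x)) := (ENNReal.ofReal_le_ofReal_iff (by positivity)).mp hΘx
    _ = 2 * Real.exp (K / 2) * (√(Ψ x) * √(Ψ x)) * (θ x / ψ x) := by ring
    _ = 2 * Real.exp (K / 2) * (Ψ x / ψ x) * θ x := by rw [Real.mul_self_sqrt hΨx.le]; ring

theorem lintegral_lt_top_of_lintegral_lt_top {Θ θ β : ℝ → ℝ} (hΨ : VanishingPrimitiveOn l b Ψ ψ)
    (hΘ : VanishingPrimitiveOn l b Θ θ)
    (hβ : ∀ y ∈ Ioo l b, ∀ x ∈ Ioo l b, IntervalIntegrable β volume y x)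
    (hβ2 : ∀ y x, l < y → y ≤ x → x < b → IntegrableOn (fun z => β z ^ 2) (Icc y x))
    (hratio : ∀ y ∈ Ioo l b, ∀ x ∈ Ioo l b,
      Real.log (θ y / ψ y) - Real.log (θ x / ψ x) ≤ |∫ z in y..x, β z|)
    (hfin : ∫⁻ x in Ioo l b, ENNReal.ofReal (Ψ x * β x ^ 2 / ψ x) < ⊤) :
    ∫⁻ x in Ioo l b, ENNReal.ofReal (Θ x * β x ^ 2 / θ x) < ⊤ := by
  set K := (∫⁻ x in Ioo l b, ENNReal.ofReal (Ψ x * β x ^ 2 / ψ x)).toReal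
  have hK : ∫⁻ x in Ioo l b, ENNReal.ofReal (Ψ x * β x ^ 2 / ψ x) = ENNReal.ofReal K :=
    (ENNReal.ofReal_toReal hfin.ne).symm
  have hpt : ∀ x ∈ Ioo l b, Θ x / θ x ≤ 2 * Real.exp (K / 2) * (Ψ x / ψ x) := by
    intro x hx
    refine hΨ.div_le_of_log_ratio_le hΘ hx fun y hy => ?_
    have hy' : y ∈ Ioo l b := ⟨hy.1, hy.2.trans hx.2⟩
    have hIcc : Icc y x ⊆ Ioo l b := ordConnected_Ioo.out hy' hx
    have hβbound := abs_intervalIntegral_le_half_add_log hy.2.le ENNReal.toReal_nonneg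
      (fun z hz => hΨ.hasDerivAt z (hIcc hz)) (hΨ.continuousOn.mono hIcc)
      (fun z hz => hΨ.pos z (hIcc hz)) (fun z hz => hΨ.primitive_pos (hIcc hz))
      (hβ y hy' x hx) (hβ2 y x hy.1 hy.2.le hx.2)
      (hK ▸ lintegral_mono_set (Ioc_subset_Icc_self.trans hIcc))
    linarith [hratio y hy' x hx]
  calc ∫⁻ x in Ioo l b, ENNReal.ofReal (Θ x * β x ^ 2 / θ x)
      ≤ ∫⁻ x in Ioo l b, ENNReal.ofReal (2 * Real.exp (K / 2)) *
          ENNReal.ofReal (Ψ x * β x ^ 2 / ψ x) := by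
        refine setLIntegral_mono' measurableSet_Ioo fun x hx => ?_
        rw [← ENNReal.ofReal_mul (by positivity)]
        refine ENNReal.ofReal_le_ofReal ?_
        rw [mul_div_right_comm, mul_div_right_comm (Ψ x), ← mul_assoc]
        exact mul_le_mul_of_nonneg_right (hpt x hx) (sq_nonneg _)
    _ = ENNReal.ofReal (2 * Real.exp (K / 2)) *
          ∫⁻ x in Ioo l b, ENNReal.ofReal (Ψ x * β x ^ 2 / ψ x) :=
        lintegral_const_mul' _ _ ENNReal.ofReal_ne_top
    _ < ⊤ := ENNReal.mul_lt_top ENNReal.ofReal_lt_top hfin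

end VanishingPrimitiveOn

theorem vanishingPrimitiveOn_sub_left (l b : ℝ) :
    VanishingPrimitiveOn l b (fun x => x - l) (fun _ => 1) where
  hasDerivAt t _ := (hasDerivAt_id t).sub_const l
  continuousOn := continuousOn_const
  pos _ _ := one_pos
  tendsto := tendsto_nhdsWithin_of_tendsto_nhds
    ((continuous_sub_right l).tendsto' l 0 (sub_self l))

section ScaleFunction

variable {l r c : ℝ} {β : ℝ → ℝ}

theorem continuousOn_Ioo_primitive (hc : c ∈ Ioo l r)
    (hβ : ∀ y ∈ Ioo l r, ∀ x ∈ Ioo l r, IntervalIntegrable β volume y x) :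
    ContinuousOn (fun x => ∫ z in c..x, β z) (Ioo l r) := by
  intro x hx
  obtain ⟨a, hla, hax⟩ := exists_between (lt_min hx.1 hc.1)
  obtain ⟨d, hxd, hdr⟩ := exists_between (max_lt hx.2 hc.2)
  have hint : IntervalIntegrable β volume (min c a) (max c d) :=
    hβ _ ⟨lt_min hc.1 hla, (min_le_left _ _).trans_lt hc.2⟩ _
      ⟨hc.1.trans_le (le_max_left _ _), max_lt hc.2 hdr⟩
  have hnhds : Icc a d ∈ 𝓝 x :=
    Icc_mem_nhds (hax.trans_le (min_le_left _ _)) ((le_max_left _ _).trans_lt hxd)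
  exact ((intervalIntegral.continuousWithinAt_primitive (measure_singleton x) hint).continuousAt
    hnhds).continuousWithinAt

theorem vanishingPrimitiveOn_scale {b sl : ℝ} {s : ℝ → ℝ} (hc : c ∈ Ioo l r) (hb : b ≤ r)
    (hβ : ∀ y ∈ Ioo l r, ∀ x ∈ Ioo l r, IntervalIntegrable β volume y x)
    (hs : ∀ x ∈ Ioo l r, s x = ∫ y in c..x, Real.exp (∫ z in c..y, β z))
    (hsl : Tendsto s (𝓝[>] l) (𝓝 sl)) :
    VanishingPrimitiveOn l b (fun x => s x - sl) (fun x => Real.exp (∫ z in c..x, β z)) := by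
  have hρ : ContinuousOn (fun x => Real.exp (∫ z in c..x, β z)) (Ioo l r) :=
    Real.continuous_exp.comp_continuousOn (continuousOn_Ioo_primitive hc hβ)
  have hs' : ∀ x ∈ Ioo l r, HasDerivAt s (Real.exp (∫ z in c..x, β z)) x := fun x hx =>
    (intervalIntegral.integral_hasDerivAt_right
      ((hρ.mono (ordConnected_Ioo.uIcc_subset hc hx)).intervalIntegrable)
      (hρ.stronglyMeasurableAtFilter isOpen_Ioo x hx)
      (hρ.continuousAt (isOpen_Ioo.mem_nhds hx))).congr_of_eventuallyEq
      (eventually_of_mem (isOpen_Ioo.mem_nhds hx) hs)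
  have hsub : Ioo l b ⊆ Ioo l r := Ioo_subset_Ioo_right hb
  exact ⟨fun x hx => (hs' x (hsub hx)).sub_const sl, hρ.mono hsub, fun _ _ => Real.exp_pos _,
    by simpa only [sub_self] using hsl.sub_const sl⟩

end ScaleFunction

theorem stmt1_general (l r c : ℝ) (hc : c ∈ Ioo l r)
    (β : ℝ → ℝ) (hβ : Measurable β)
    (hloc : ∀ a b : ℝ, l < a → a ≤ b → b < r →
      IntegrableOn (fun x => (β x) ^ 2) (Icc a b) volume)
    (s : ℝ → ℝ)
    (hs : ∀ x ∈ Ioo l r, s x = ∫ y in c..x, Real.exp (∫ z in c..y, β z))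
    (sl : ℝ) (hsl : Tendsto s (nhdsWithin l (Ioi l)) (nhds sl)) :
    ∀ ε > (0:ℝ), l + ε < r →
      ((∫⁻ x in Ioo l (l + ε),
          ENNReal.ofReal ((s x - sl) * (β x) ^ 2 / Real.exp (∫ z in c..x, β z)) < ⊤) ↔
        (∫⁻ x in Ioo l (l + ε), ENNReal.ofReal ((x - l) * (β x) ^ 2) < ⊤)) := by
  intro ε _ hεr
  have hβint : ∀ y ∈ Ioo l r, ∀ x ∈ Ioo l r, IntervalIntegrable β volume y x := fun y hy x hx =>
    (integrableOn_of_integrableOn_sq measure_Icc_lt_top.ne hβ.aestronglyMeasurable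
      (hloc _ _ (lt_min hy.1 hx.1) inf_le_sup (max_lt hy.2 hx.2))).intervalIntegrable
  have hsub : Ioo l (l + ε) ⊆ Ioo l r := Ioo_subset_Ioo_right hεr.le
  have hβint' : ∀ y ∈ Ioo l (l + ε), ∀ x ∈ Ioo l (l + ε), IntervalIntegrable β volume y x :=
    fun y hy x hx => hβint y (hsub hy) x (hsub hx)
  have hβ2 : ∀ y x, l < y → y ≤ x → x < l + ε → IntegrableOn (fun z => β z ^ 2) (Icc y x) :=
    fun y x hy hyx hx => hloc y x hy hyx (hx.trans hεr)
  have hw : ∀ y ∈ Ioo l (l + ε), ∀ x ∈ Ioo l (l + ε),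
      (∫ z in c..x, β z) - ∫ z in c..y, β z = ∫ z in y..x, β z := fun y hy x hx =>
    intervalIntegral.integral_interval_sub_left (hβint c hc x (hsub hx)) (hβint c hc y (hsub hy))
  have hratio : ∀ y ∈ Ioo l (l + ε), ∀ x ∈ Ioo l (l + ε),
      Real.log (1 / Real.exp (∫ z in c..y, β z)) - Real.log (1 / Real.exp (∫ z in c..x, β z)) ≤
        |∫ z in y..x, β z| := fun y hy x hx => by
    rw [one_div, one_div, Real.log_inv, Real.log_inv, Real.log_exp, Real.log_exp, neg_sub_neg,
      ← hw y hy x hx]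
    exact le_abs_self _
  have hratio' : ∀ y ∈ Ioo l (l + ε), ∀ x ∈ Ioo l (l + ε),
      Real.log (Real.exp (∫ z in c..y, β z) / 1) - Real.log (Real.exp (∫ z in c..x, β z) / 1) ≤
        |∫ z in y..x, β z| := fun y hy x hx => by
    rw [div_one, div_one, Real.log_exp, Real.log_exp, ← hw y hy x hx, abs_sub_comm]
    exact le_abs_self _
  have hΦ := vanishingPrimitiveOn_scale (b := l + ε) hc hεr.le hβint hs hsl
  have hid := vanishingPrimitiveOn_sub_left l (l + ε)
  exact ⟨fun hA => by simpa only [div_one] using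
      hΦ.lintegral_lt_top_of_lintegral_lt_top hid hβint' hβ2 hratio hA,
    fun hB => hid.lintegral_lt_top_of_lintegral_lt_top hΦ hβint' hβ2 hratio'
      (by simpa only [div_one] using hB)⟩

/-- With `s(x) = ∫_c^x exp(∫_c^y β(z) dz) dy` on `(l,r)`, `β²` locally integrable,
and `s(l) > -∞` (i.e. `s` tends to a finite limit `sl` at `l+`), for any `ε > 0` with
`l + ε ∈ (l,r)`:  `∫_l^{l+ε} (s(x) - s(l))·β(x)²/s'(x) dx < ∞  ↔  ∫_l^{l+ε} (x-l)·β(x)² dx < ∞`,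
where `s'(x) = exp(∫_c^x β(z) dz)`. -/
theorem stmt1 (l r c : ℝ) (hlr : l < r) (hc : c ∈ Ioo l r)
    (β : ℝ → ℝ) (hβ : Measurable β)
    (hloc : ∀ a b : ℝ, l < a → a ≤ b → b < r →
      IntegrableOn (fun x => (β x) ^ 2) (Icc a b) volume)
    (s : ℝ → ℝ)
    (hs : ∀ x ∈ Ioo l r, s x = ∫ y in c..x, Real.exp (∫ z in c..y, β z))
    (sl : ℝ) (hsl : Tendsto s (nhdsWithin l (Ioi l)) (nhds sl)) :
    ∀ ε > (0:ℝ), l + ε < r →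
      ((∫⁻ x in Ioo l (l + ε),
          ENNReal.ofReal ((s x - sl) * (β x) ^ 2 / Real.exp (∫ z in c..x, β z)) < ⊤) ↔
        (∫⁻ x in Ioo l (l + ε), ENNReal.ofReal ((x - l) * (β x) ^ 2) < ⊤)) :=
  stmt1_general l r c hc β hβ hloc s hs sl hsl
end

section
/- Let s : (l, r) → ℝ be a strictly increasing C¹ function with strictly positive locally absolutely continuous derivative s', and let q = s⁻¹. Then Lebesgue-a.e., (q''(u)/q'(u))² = (β(q(u))·q'(u))², where β = s''/s' (defined a.e.), and this function is locally integrable on s((l,r)) whenever β² is locally integrable on (l,r). -/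
open MeasureTheory Set Filter
open scoped Topology

/-!
On `J = s '' (l, r)` the inverse satisfies `q' = 1 / (s' ∘ q)`, so wherever `s'` is differentiable
at `q u` the chain rule gives `q'' = -s''(q) q'³ = -β(q) q'²`. The exceptional points `u` have
full measure because a differentiable map (here `s`) sends null sets to null sets. For local
integrability, the substitution `u = s x` turns `∫_K β(q u)² q'(u)² du` into
`∫_{q K} β(x)² / s'(x) dx`, and `1 / s'` is bounded on the compact set `q K`.
-/

theorem IsOpen.exists_mem_Ioo_Icc_subset {α : Type*} [LinearOrder α] [TopologicalSpace α]
    [OrderTopology α] [DenselyOrdered α] [NoMinOrder α] [NoMaxOrder α] {U : Set α}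
    (hU : IsOpen U) {x : α} (hx : x ∈ U) : ∃ a b, x ∈ Ioo a b ∧ Icc a b ⊆ U := by
  obtain ⟨a, b, -, hab, hsub⟩ := exists_Icc_mem_subset_of_mem_nhds (hU.mem_nhds hx)
  exact ⟨a, b, Icc_mem_nhds_iff.1 hab, hsub⟩

theorem StrictMonoOn.isOpen_image {α β : Type*} [ConditionallyCompleteLinearOrder α]
    [TopologicalSpace α] [OrderTopology α] [DenselyOrdered α] [NoMinOrder α] [NoMaxOrder α]
    [LinearOrder β] [TopologicalSpace β] [OrderTopology β] {f : α → β} {U : Set α}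
    (hf : StrictMonoOn f U) (hU : IsOpen U) (hcont : ContinuousOn f U) : IsOpen (f '' U) := by
  rw [isOpen_iff_mem_nhds]
  rintro _ ⟨x, hx, rfl⟩
  obtain ⟨a, b, hxab, habU⟩ := hU.exists_mem_Ioo_Icc_subset hx
  have hab : a ≤ b := hxab.1.le.trans hxab.2.le
  have himage : f '' Ioo a b = Ioo (f a) (f b) :=
    (hcont.mono habU).image_Ioo_of_strictMonoOn hab (hf.mono habU)
  refine mem_of_superset (Ioo_mem_nhds ?_ ?_)
    (himage ▸ image_mono (Ioo_subset_Icc_self.trans habU))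
  · exact hf (habU (left_mem_Icc.2 hab)) hx hxab.1
  · exact hf hx (habU (right_mem_Icc.2 hab)) hxab.2

theorem ae_restrict_of_forall_mem_nhdsWithin {X : Type*} [TopologicalSpace X]
    [SecondCountableTopology X] [MeasurableSpace X] {μ : Measure X} {U : Set X} {p : X → Prop}
    (h : ∀ x ∈ U, ∃ t ∈ 𝓝[U] x, ∀ᵐ y ∂μ.restrict t, p y) : ∀ᵐ y ∂μ.restrict U, p y := by
  choose! t ht hp using h
  obtain ⟨T, hTU, hT, hcover⟩ := TopologicalSpace.countable_cover_nhdsWithin ht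
  exact ae_restrict_of_ae_restrict_of_subset hcover
    ((ae_restrict_biUnion_iff t hT p).2 fun x hx => hp x (hTU hx))

theorem ae_hasDerivAt_of_sub_eq_intervalIntegral {E : Type*} [NormedAddCommGroup E]
    [NormedSpace ℝ E] [CompleteSpace E] {U : Set ℝ} (hU : IsOpen U) {F f : ℝ → E}
    (h : ∀ u v, u ∈ U → v ∈ U → u ≤ v →
      IntervalIntegrable f volume u v ∧ F v - F u = ∫ w in u..v, f w) :
    ∀ᵐ x ∂volume.restrict U, HasDerivAt F (f x) x := by
  refine ae_restrict_of_forall_mem_nhdsWithin fun x hx => ?_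
  obtain ⟨a, b, hxab, habU⟩ := hU.exists_mem_Ioo_Icc_subset hx
  have hab : a ≤ b := hxab.1.le.trans hxab.2.le
  have haU : a ∈ U := habU (left_mem_Icc.2 hab)
  have hF : ∀ v ∈ Ioo a b, F v = F a + ∫ w in a..v, f w := fun v hv =>
    eq_add_of_sub_eq' (h a v haU (habU (Ioo_subset_Icc_self hv)) hv.1.le).2
  have hint : IntervalIntegrable f volume a b := (h a b haU (habU (right_mem_Icc.2 hab)) hab).1
  refine ⟨Ioo a b, nhdsWithin_le_nhds (Ioo_mem_nhds hxab.1 hxab.2), ?_⟩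
  filter_upwards [ae_restrict_of_ae hint.ae_hasDerivAt_integral,
    ae_restrict_mem measurableSet_Ioo] with y hy hyab
  have hyab' : y ∈ uIcc a b := uIcc_of_le hab ▸ Ioo_subset_Icc_self hyab
  exact ((hy hyab' a left_mem_uIcc).const_add (F a)).congr_of_eventuallyEq
    (eventually_of_mem (Ioo_mem_nhds hyab.1 hyab.2) hF)

theorem ae_restrict_image_of_leftInvOn {E : Type*} [NormedAddCommGroup E] [NormedSpace ℝ E]
    [FiniteDimensional ℝ E] [MeasurableSpace E] [BorelSpace E] {μ : Measure E}
    [μ.IsAddHaarMeasure] {f g : E → E} {s : Set E} {p : E → Prop} (hs : MeasurableSet s)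
    (hfs : MeasurableSet (f '' s)) (hf : DifferentiableOn ℝ f s) (hg : LeftInvOn g f s)
    (hp : ∀ᵐ x ∂μ.restrict s, p x) : ∀ᵐ y ∂μ.restrict (f '' s), p (g y) := by
  rw [ae_iff, Measure.restrict_apply' hs] at hp
  rw [ae_iff, Measure.restrict_apply' hfs]
  refine measure_mono_null ?_
    (addHaar_image_eq_zero_of_differentiableOn_of_addHaar_eq_zero μ (hf.mono inter_subset_right) hp)
  rintro _ ⟨hnp, x, hx, rfl⟩
  exact ⟨x, ⟨by simpa [hg hx] using hnp, hx⟩, rfl⟩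

theorem mul_eq_one_of_hasDerivAt_comp_eventuallyEq_id {𝕜 : Type*} [NontriviallyNormedField 𝕜]
    {s q : 𝕜 → 𝕜} {x a b : 𝕜} (hs : HasDerivAt s a x) (hq : HasDerivAt q b (s x))
    (hqs : q ∘ s =ᶠ[𝓝 x] id) : b * a = 1 :=
  (hq.comp x hs).unique ((hasDerivAt_id x).congr_of_eventuallyEq hqs)

theorem hasDerivAt_of_eventuallyEq_inv_comp {𝕜 : Type*} [NontriviallyNormedField 𝕜]
    {q q' s' : 𝕜 → 𝕜} {u d : 𝕜} (hq'eq : q' =ᶠ[𝓝 u] fun v => (s' (q v))⁻¹)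
    (hq : HasDerivAt q (q' u) u) (hs' : HasDerivAt s' d (q u)) (hne : s' (q u) ≠ 0) :
    HasDerivAt q' (-(d * q' u ^ 3)) u := by
  have hu : q' u = (s' (q u))⁻¹ := hq'eq.eq_of_nhds
  refine (((hs'.comp u hq).inv hne).congr_of_eventuallyEq hq'eq).congr_deriv ?_
  simp only [Function.comp_apply, hu]
  field_simp

theorem integrableOn_comp_mul_sq_of_leftInvOn {U K : Set ℝ} {s s' q q' h : ℝ → ℝ}
    (hs : ∀ x ∈ U, HasDerivAt s (s' x) x) (hs'pos : ∀ x ∈ U, 0 < s' x)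
    (hs'cont : ContinuousOn s' U) (hq : LeftInvOn q s U) (hqs : ∀ x ∈ U, q' (s x) * s' x = 1)
    (hqcont : ContinuousOn q K) (hh : LocallyIntegrableOn h U) (hK : IsCompact K)
    (hKU : K ⊆ s '' U) : IntegrableOn (fun u => h (q u) * q' u ^ 2) K := by
  have hAU : q '' K ⊆ U := ((hq.mapsTo (surjOn_image s U)).mono_left hKU).image_subset
  have hA : IsCompact (q '' K) := hK.image_of_continuousOn hqcont
  have hsA : s '' (q '' K) = K := (hq.rightInvOn_image.mono hKU).image_image
  rw [← hsA, integrableOn_image_iff_integrableOn_abs_deriv_smul hA.measurableSet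
    (fun x hx => (hs x (hAU hx)).hasDerivWithinAt) (hq.injOn.mono hAU)]
  refine (IntegrableOn.continuousOn_mul
      ((hs'cont.mono hAU).inv₀ fun x hx => (hs'pos x (hAU hx)).ne')
      (hh.integrableOn_compact_subset hAU hA) hA).congr_fun (fun x hx => ?_) hA.measurableSet
  have hpos := hs'pos x (hAU hx)
  rw [hq (hAU hx), eq_inv_of_mul_eq_one_left (hqs x (hAU hx)), abs_of_pos hpos, smul_eq_mul]
  simp only [Pi.inv_apply]
  field_simp

theorem stmt3_general (l r : ℝ)
    (s s' s'' β q q' q'' : ℝ → ℝ)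
    (hmono : StrictMonoOn s (Ioo l r))
    (hderiv : ∀ x ∈ Ioo l r, HasDerivAt s (s' x) x)
    (hs'pos : ∀ x ∈ Ioo l r, 0 < s' x)
    (hs'cont : ContinuousOn s' (Ioo l r))
    (hAC : ∀ x y : ℝ, x ∈ Ioo l r → y ∈ Ioo l r → x ≤ y →
      (IntervalIntegrable s'' volume x y ∧ s' y - s' x = ∫ z in x..y, s'' z))
    (hβ : ∀ x ∈ Ioo l r, β x = s'' x / s' x)
    (hβloc : LocallyIntegrableOn (fun x => (β x) ^ 2) (Ioo l r) volume)
    (hq : ∀ x ∈ Ioo l r, q (s x) = x)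
    (hq' : ∀ u ∈ s '' Ioo l r, HasDerivAt q (q' u) u)
    (hqAC : ∀ u v : ℝ, u ∈ s '' Ioo l r → v ∈ s '' Ioo l r → u ≤ v →
      (IntervalIntegrable q'' volume u v ∧ q' v - q' u = ∫ w in u..v, q'' w)) :
    (∀ᵐ u ∂(volume.restrict (s '' Ioo l r)),
        (q'' u / q' u) ^ 2 = (β (q u) * q' u) ^ 2) ∧
      LocallyIntegrableOn (fun u => (q'' u / q' u) ^ 2) (s '' Ioo l r) volume := by
  have hleft : LeftInvOn q s (Ioo l r) := fun x hx => hq x hx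
  have hJ : IsOpen (s '' Ioo l r) :=
    hmono.isOpen_image isOpen_Ioo fun x hx => (hderiv x hx).continuousAt.continuousWithinAt
  have hqJ : MapsTo q (s '' Ioo l r) (Ioo l r) := hleft.mapsTo (surjOn_image s _)
  have hinv : ∀ x ∈ Ioo l r, q' (s x) * s' x = 1 := fun x hx =>
    mul_eq_one_of_hasDerivAt_comp_eventuallyEq_id (hderiv x hx) (hq' _ (mem_image_of_mem s hx))
      (eventually_of_mem (isOpen_Ioo.mem_nhds hx) hleft)
  have hq'J : ∀ u ∈ s '' Ioo l r, q' u = (s' (q u))⁻¹ := by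
    rintro _ ⟨x, hx, rfl⟩
    rw [hq x hx]
    exact eq_inv_of_mul_eq_one_left (hinv x hx)
  have hq''ae : ∀ᵐ u ∂volume.restrict (s '' Ioo l r), q'' u = -(s'' (q u) * q' u ^ 3) := by
    filter_upwards [ae_hasDerivAt_of_sub_eq_intervalIntegral hJ hqAC,
      ae_restrict_image_of_leftInvOn measurableSet_Ioo hJ.measurableSet
        (fun x hx => (hderiv x hx).differentiableAt.differentiableWithinAt) hleft
        (ae_hasDerivAt_of_sub_eq_intervalIntegral isOpen_Ioo hAC),
      ae_restrict_mem hJ.measurableSet] with u hq''u hs''u hu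
    exact hq''u.unique (hasDerivAt_of_eventuallyEq_inv_comp
      (eventually_of_mem (hJ.mem_nhds hu) hq'J) (hq' u hu) hs''u (hs'pos _ (hqJ hu)).ne')
  have hae : ∀ᵐ u ∂volume.restrict (s '' Ioo l r),
      (q'' u / q' u) ^ 2 = (β (q u) * q' u) ^ 2 := by
    filter_upwards [hq''ae, ae_restrict_mem hJ.measurableSet] with u hq''u hu
    have hpos := hs'pos _ (hqJ hu)
    rw [hq''u, hβ _ (hqJ hu), hq'J u hu]
    field_simp
  refine ⟨hae, (locallyIntegrableOn_iff hJ.isLocallyClosed).2 fun K hKJ hK => ?_⟩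
  refine (integrableOn_comp_mul_sq_of_leftInvOn hderiv hs'pos hs'cont hleft hinv
    (fun u hu => (hq' u (hKJ hu)).continuousAt.continuousWithinAt) hβloc hK hKJ).congr_fun_ae ?_
  filter_upwards [ae_restrict_of_ae_restrict_of_subset hKJ hae] with u hu
  rw [hu, mul_pow]

/-- Let `s : (l,r) → ℝ` be strictly increasing and C¹ with strictly positive
locally absolutely continuous derivative `s'` (a.e. derivative `s''`), `β = s''/s'` with `β²`
locally integrable, and `q = s⁻¹` with derivative `q'` and a.e. second derivative `q''`.
Then Lebesgue-a.e. on `s((l,r))`, `(q''(u)/q'(u))² = (β(q(u))·q'(u))²`, and this function is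
locally integrable on `s((l,r))`. -/
theorem stmt3 (l r : ℝ) (hlr : l < r)
    (s s' s'' β q q' q'' : ℝ → ℝ)
    (hmono : StrictMonoOn s (Ioo l r))
    (hderiv : ∀ x ∈ Ioo l r, HasDerivAt s (s' x) x)
    (hs'pos : ∀ x ∈ Ioo l r, 0 < s' x)
    (hs'cont : ContinuousOn s' (Ioo l r))
    (hs'' : Measurable s'')
    (hAC : ∀ x y : ℝ, x ∈ Ioo l r → y ∈ Ioo l r → x ≤ y →
      (IntervalIntegrable s'' volume x y ∧ s' y - s' x = ∫ z in x..y, s'' z))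
    (hβ : ∀ x ∈ Ioo l r, β x = s'' x / s' x)
    (hβloc : LocallyIntegrableOn (fun x => (β x) ^ 2) (Ioo l r) volume)
    (hq : ∀ x ∈ Ioo l r, q (s x) = x)
    (hq' : ∀ u ∈ s '' Ioo l r, HasDerivAt q (q' u) u)
    (hq'' : Measurable q'')
    (hqAC : ∀ u v : ℝ, u ∈ s '' Ioo l r → v ∈ s '' Ioo l r → u ≤ v →
      (IntervalIntegrable q'' volume u v ∧ q' v - q' u = ∫ w in u..v, q'' w)) :
    (∀ᵐ u ∂(volume.restrict (s '' Ioo l r)),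
        (q'' u / q' u) ^ 2 = (β (q u) * q' u) ^ 2) ∧
      LocallyIntegrableOn (fun u => (q'' u / q' u) ^ 2) (s '' Ioo l r) volume :=
  stmt3_general l r s s' s'' β q q' q'' hmono hderiv hs'pos hs'cont hAC hβ hβloc hq hq' hqAC
end

section
/- Let Z be a nonnegative càdlàg supermartingale and X a continuous process with |X_t − b| bounded near times when X hits the finite value b, such that Z·|X − b| is a nonnegative local martingale. If Z is strictly positive, then once X hits b, X stays at b afterwards almost surely (b is absorbing). -/
/-!
A nonnegative martingale `M` cannot leave zero. For finite `Q ⊆ [0, r]`, split the event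
`{∃ q ∈ Q, M_q ≤ ε}` according to the first such `q`; each piece lies in `ℱ_q`, so by the
martingale property it carries `E[M_r; ·] = E[M_q; ·] ≤ ε μ(·)`, and summing gives
`E[M_r; ∃ q ∈ Q, M_q ≤ ε] ≤ ε`. Passing to a countable `Q` and letting `ε → 0` shows `M_r = 0`
a.s. on `{inf_{q ∈ Q} M_q = 0}`, and localisation carries this over to the local martingale
`Y = Z |X - b|`. If `X_s = b` then `Y_s = 0`, so right-continuity of `Y` gives `Y_ρ = 0`, hence
`X_ρ = b` as `Z > 0`, for all `ρ > s` in a countable dense set; continuity of `X` does the rest.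
-/

open MeasureTheory Set Filter

variable {Ω : Type*} {m : MeasurableSpace Ω}

/-- Local martingale (index set `ℝ≥0`) via a localizing sequence of stopping times. -/
def IsLocalMartingale (ℱ : Filtration NNReal m) (μ : Measure Ω) (Z : NNReal → Ω → ℝ) : Prop :=
  ∃ τ : ℕ → Ω → NNReal, (∀ n, IsStoppingTime ℱ (fun ω => (τ n ω : WithTop NNReal))) ∧
    (∀ n, Martingale (MeasureTheory.stoppedProcess Z (fun ω => (τ n ω : WithTop NNReal))) ℱ μ) ∧
    ∀ᵐ ω ∂μ, Tendsto (fun n => τ n ω) atTop atTop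

open Topology

section FirstHit

variable {ι : Type*} [LinearOrder ι]

def firstHit (M : ι → Ω → ℝ) (ε : ℝ) (Q : Finset ι) (q : ι) : Set Ω :=
  {ω | M q ω ≤ ε} ∩ ⋂ p ∈ Q.filter (· < q), {ω | ε < M p ω}

variable {M : ι → Ω → ℝ} {ε : ℝ} {Q : Finset ι}

lemma mem_firstHit {q : ι} {ω : Ω} :
    ω ∈ firstHit M ε Q q ↔ M q ω ≤ ε ∧ ∀ p ∈ Q, p < q → ε < M p ω := by
  simp [firstHit]

lemma pairwiseDisjoint_firstHit : (Q : Set ι).PairwiseDisjoint (firstHit M ε Q) := by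
  intro p hp q hq hpq
  refine Set.disjoint_left.2 fun ω hωp hωq => ?_
  rw [mem_firstHit] at hωp hωq
  rcases hpq.lt_or_gt with h | h
  · exact (hωq.2 p hp h).not_ge hωp.1
  · exact (hωp.2 q hq h).not_ge hωq.1

lemma biUnion_firstHit : ⋃ q ∈ Q, firstHit M ε Q q = ⋃ q ∈ Q, {ω | M q ω ≤ ε} := by
  refine (iUnion₂_mono fun q _ => inter_subset_left).antisymm ?_
  intro ω hω
  obtain ⟨q₀, hq₀, hM⟩ := mem_iUnion₂.1 hω
  classical
  let H := Q.filter fun q => M q ω ≤ ε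
  have hH : H.Nonempty := ⟨q₀, Finset.mem_filter.2 ⟨hq₀, hM⟩⟩
  obtain ⟨hmin, hminM⟩ := Finset.mem_filter.1 (H.min'_mem hH)
  refine mem_iUnion₂.2 ⟨H.min' hH, hmin, mem_firstHit.2 ⟨hminM, fun p hp hlt => ?_⟩⟩
  exact lt_of_not_ge fun hpM => hlt.not_ge (H.min'_le p (Finset.mem_filter.2 ⟨hp, hpM⟩))

lemma measurableSet_firstHit {ℱ : Filtration ι m} (hM : StronglyAdapted ℱ M) (q : ι) :
    MeasurableSet[ℱ q] (firstHit M ε Q q) := by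
  refine ((hM q).measurable measurableSet_Iic).inter <|
    Finset.measurableSet_biInter _ fun p hp => ?_
  exact ℱ.mono (Finset.mem_filter.1 hp).2.le _ ((hM p).measurable measurableSet_Ioi)

end FirstHit

namespace MeasureTheory.Martingale

variable {ι : Type*} {μ : Measure Ω} [IsFiniteMeasure μ] {M : ι → Ω → ℝ} {ε : ℝ}

lemma setLIntegral_ofReal_le [Preorder ι] {ℱ : Filtration ι m} (hM : Martingale M ℱ μ)
    {i j : ι} (hij : i ≤ j) (hMj : 0 ≤ M j) {A : Set Ω} (hA : MeasurableSet[ℱ i] A)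
    (hMA : ∀ ω ∈ A, M i ω ≤ ε) :
    ∫⁻ ω in A, ENNReal.ofReal (M j ω) ∂μ ≤ ENNReal.ofReal ε * μ A := by
  have hA' : MeasurableSet A := ℱ.le i A hA
  calc ∫⁻ ω in A, ENNReal.ofReal (M j ω) ∂μ
      = ENNReal.ofReal (∫ ω in A, M i ω ∂μ) := by
        rw [hM.setIntegral_eq hij hA, ofReal_integral_eq_lintegral_ofReal
          (hM.integrable j).integrableOn (ae_of_all _ hMj)]
    _ ≤ ENNReal.ofReal (∫ _ in A, ε ∂μ) := ENNReal.ofReal_le_ofReal <|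
        setIntegral_mono_on (hM.integrable i).integrableOn integrableOn_const hA' hMA
    _ = ENNReal.ofReal ε * μ A := by
        rw [setIntegral_const, smul_eq_mul, mul_comm, ENNReal.ofReal_mul' measureReal_nonneg,
          ofReal_measureReal]

variable [LinearOrder ι] {ℱ : Filtration ι m}

lemma setLIntegral_biUnion_finset_le (hM : Martingale M ℱ μ) {r : ι} (hMr : 0 ≤ M r)
    {Q : Finset ι} (hQ : ∀ q ∈ Q, q ≤ r) :
    ∫⁻ ω in ⋃ q ∈ Q, {ω | M q ω ≤ ε}, ENNReal.ofReal (M r ω) ∂μ ≤ ENNReal.ofReal ε * μ univ := by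
  have hmeas q : MeasurableSet (firstHit M ε Q q) :=
    ℱ.le q _ (measurableSet_firstHit hM.stronglyAdapted q)
  rw [← biUnion_firstHit, lintegral_biUnion_finset pairwiseDisjoint_firstHit fun q _ => hmeas q]
  calc ∑ q ∈ Q, ∫⁻ ω in firstHit M ε Q q, ENNReal.ofReal (M r ω) ∂μ
      ≤ ∑ q ∈ Q, ENNReal.ofReal ε * μ (firstHit M ε Q q) :=
        Finset.sum_le_sum fun q hq => hM.setLIntegral_ofReal_le (hQ q hq) hMr
          (measurableSet_firstHit hM.stronglyAdapted q) fun ω hω => (mem_firstHit.1 hω).1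
    _ = ENNReal.ofReal ε * μ (⋃ q ∈ Q, firstHit M ε Q q) := by
        rw [← Finset.mul_sum, measure_biUnion_finset pairwiseDisjoint_firstHit fun q _ => hmeas q]
    _ ≤ ENNReal.ofReal ε * μ univ := by gcongr; exact subset_univ _

lemma setLIntegral_biUnion_countable_le (hM : Martingale M ℱ μ) {r : ι} (hMr : 0 ≤ M r)
    {S : Set ι} (hS : S.Countable) (hSr : ∀ q ∈ S, q ≤ r) :
    ∫⁻ ω in ⋃ q ∈ S, {ω | M q ω ≤ ε}, ENNReal.ofReal (M r ω) ∂μ ≤ ENNReal.ofReal ε * μ univ := by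
  have := hS.to_subtype
  have hmono : Monotone fun F : Finset S => ⋃ q ∈ F, {ω | M q ω ≤ ε} :=
    fun F G hFG => iUnion₂_mono' fun q hq => ⟨q, hFG hq, subset_rfl⟩
  rw [← withDensity_apply', biUnion_eq_iUnion, iUnion_eq_iUnion_finset,
    hmono.directed_le.measure_iUnion]
  refine iSup_le fun F => ?_
  have hF : ⋃ q ∈ F, {ω | M q ω ≤ ε} =
      ⋃ q ∈ F.map (Function.Embedding.subtype _), {ω | M q ω ≤ ε} := by
    ext; simp
  rw [withDensity_apply', hF]
  refine hM.setLIntegral_biUnion_finset_le hMr fun q hq => ?_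
  obtain ⟨q, -, rfl⟩ := Finset.mem_map.1 hq
  exact hSr q q.2

lemma ae_eq_zero_of_forall_exists_le (hM : Martingale M ℱ μ) {r : ι} (hMr : 0 ≤ M r)
    {S : Set ι} (hS : S.Countable) :
    ∀ᵐ ω ∂μ, (∀ ε > 0, ∃ q ∈ S, q ≤ r ∧ M q ω ≤ ε) → M r ω = 0 := by
  set G := {ω | ∀ ε > 0, ∃ q ∈ S, q ≤ r ∧ M q ω ≤ ε}
  set ν := μ.withDensity fun ω => ENNReal.ofReal (M r ω)
  have hbound : ∀ ε > 0, ν G ≤ ENNReal.ofReal ε * μ univ := by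
    intro ε hε
    rw [withDensity_apply']
    refine (lintegral_mono_set fun ω hω => ?_).trans
      (hM.setLIntegral_biUnion_countable_le hMr (hS.mono inter_subset_left) fun q hq => hq.2)
    obtain ⟨q, hqS, hqr, hq⟩ := hω ε hε
    exact mem_iUnion₂.2 ⟨q, ⟨hqS, hqr⟩, hq⟩
  have hlim : Tendsto (fun ε => ENNReal.ofReal ε * μ univ) (𝓝[>] 0) (𝓝 0) := by
    have h0 : Tendsto ENNReal.ofReal (𝓝[>] 0) (𝓝 0) := by
      rw [← ENNReal.ofReal_zero]; exact ENNReal.continuous_ofReal.continuousWithinAt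
    simpa using ENNReal.Tendsto.mul_const h0 (Or.inr (measure_ne_top μ univ))
  have hG : ν G = 0 :=
    nonpos_iff_eq_zero.1 <| ge_of_tendsto hlim (eventually_nhdsWithin_of_forall hbound)
  rw [withDensity_apply_eq_zero' (hM.integrable r).aemeasurable.ennreal_ofReal] at hG
  filter_upwards [measure_eq_zero_iff_ae_notMem.1 hG] with ω hω hωG
  refine le_antisymm (not_lt.1 fun hpos => hω ⟨?_, hωG⟩) (hMr ω)
  simpa using hpos

end MeasureTheory.Martingale

lemma IsLocalMartingale.ae_eq_zero_of_forall_exists_le {μ : Measure Ω} [IsFiniteMeasure μ]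
    {ℱ : Filtration NNReal m} {Y : NNReal → Ω → ℝ} (hY : IsLocalMartingale ℱ μ Y)
    (hY0 : ∀ t, 0 ≤ Y t) {S : Set NNReal} (hS : S.Countable) (r : NNReal) :
    ∀ᵐ ω ∂μ, (∀ ε > 0, ∃ q ∈ S, q ≤ r ∧ Y q ω ≤ ε) → Y r ω = 0 := by
  obtain ⟨τ, -, hτ, hτ_tendsto⟩ := hY
  have hstopped := ae_all_iff.2 fun n =>
    (hτ n).ae_eq_zero_of_forall_exists_le (r := r) (fun ω => hY0 _ ω) hS
  filter_upwards [hstopped, hτ_tendsto] with ω hω hτω hG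
  obtain ⟨n, hn⟩ := (hτω.eventually_ge_atTop r).exists
  have hstop : ∀ q ≤ r, stoppedProcess Y (fun ω => (τ n ω : WithTop NNReal)) q ω = Y q ω :=
    fun q hq => stoppedProcess_eq_of_le (by exact_mod_cast hq.trans hn)
  rw [← hstop r le_rfl]
  exact hω n fun ε hε =>
    (hG ε hε).imp fun q ⟨hqS, hqr, hq⟩ => ⟨hqS, hqr, (hstop q hqr).symm ▸ hq⟩

lemma Dense.exists_mem_lt_of_continuousWithinAt_Ici {α β : Type*} [TopologicalSpace α]
    [LinearOrder α] [OrderTopology α] [DenselyOrdered α] [TopologicalSpace β] {D : Set α}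
    (hD : Dense D) {f : α → β} {s ρ : α} (hf : ContinuousWithinAt f (Ici s) s) (hsρ : s < ρ)
    {V : Set β} (hV : V ∈ 𝓝 (f s)) :
    ∃ q ∈ D, q < ρ ∧ f q ∈ V := by
  have : f ⁻¹' V ∈ 𝓝[>] s := nhdsWithin_mono _ Ioi_subset_Ici_self (hf hV)
  obtain ⟨u, hsu, hu⟩ := (mem_nhdsGT_iff_exists_Ioo_subset' hsρ).1 this
  obtain ⟨q, hqD, hsq, hq⟩ := hD.exists_between (lt_min hsu hsρ)
  exact ⟨q, hqD, hq.trans_le (min_le_right _ _), hu ⟨hsq, hq.trans_le (min_le_left _ _)⟩⟩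

theorem stmt9_general (μ : Measure Ω) [IsProbabilityMeasure μ] (ℱ : Filtration NNReal m)
    (X Z : NNReal → Ω → ℝ) (b : ℝ)
    (hXcont : ∀ ω, Continuous fun t => X t ω)
    (hZpos : ∀ t ω, 0 < Z t ω)
    (hZright : ∀ ω t, ContinuousWithinAt (fun s => Z s ω) (Ici t) t)
    (hLM : IsLocalMartingale ℱ μ (fun t ω => Z t ω * |X t ω - b|)) :
    ∀ᵐ ω ∂μ, ∀ s t : NNReal, s ≤ t → X s ω = b → X t ω = b := by
  obtain ⟨D, hDc, hD⟩ := TopologicalSpace.exists_countable_dense NNReal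
  have hzero := (ae_ball_iff hDc).2 fun r (_ : r ∈ D) =>
    hLM.ae_eq_zero_of_forall_exists_le (fun t ω => mul_nonneg (hZpos t ω).le (abs_nonneg _)) hDc r
  filter_upwards [hzero] with ω hω s t hst hXs
  have hYright : ContinuousWithinAt (fun u => Z u ω * |X u ω - b|) (Ici s) s :=
    (hZright ω s).mul ((hXcont ω).sub continuous_const).abs.continuousWithinAt
  have hXD : EqOn (fun u => X u ω) (fun _ => b) (Ioi s ∩ D) := by
    rintro ρ ⟨hsρ, hρD⟩
    have hYρ : Z ρ ω * |X ρ ω - b| = 0 := hω ρ hρD fun ε hε => by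
      obtain ⟨q, hqD, hqρ, hq⟩ := hD.exists_mem_lt_of_continuousWithinAt_Ici hYright hsρ
        (Iic_mem_nhds (by simpa [hXs] using hε))
      exact ⟨q, hqD, hqρ.le, hq⟩
    simpa [(hZpos ρ ω).ne', sub_eq_zero] using hYρ
  rcases hst.eq_or_lt with rfl | hst
  · exact hXs
  · exact hXD.of_subset_closure (hXcont ω).continuousOn continuousOn_const inter_subset_left
      (hD.open_subset_closure_inter isOpen_Ioi) hst

/-- Let `Z` be a strictly positive càdlàg (nonnegative) supermartingale and `X` a
continuous adapted process such that `Z·|X − b|` is a nonnegative local martingale.  Then a.s.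
once `X` hits the finite value `b`, it stays at `b` (the point `b` is absorbing). -/
theorem stmt9 (μ : Measure Ω) [IsProbabilityMeasure μ] (ℱ : Filtration NNReal m)
    (X Z : NNReal → Ω → ℝ) (b : ℝ)
    (hXcont : ∀ ω, Continuous fun t => X t ω)
    (hXadapted : Adapted ℱ X)
    (hZpos : ∀ t ω, 0 < Z t ω)
    (hZright : ∀ ω t, ContinuousWithinAt (fun s => Z s ω) (Ici t) t)
    (hZsuper : Supermartingale Z ℱ μ)
    (hLM : IsLocalMartingale ℱ μ (fun t ω => Z t ω * |X t ω - b|)) :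
    ∀ᵐ ω ∂μ, ∀ s t : NNReal, s ≤ t → X s ω = b → X t ω = b :=
  stmt9_general μ ℱ X Z b hXcont hZpos hZright hLM
end

section
/- Let T = ∞ and let b ∈ {l, r} be a finite boundary point of the state space with |s(b)| = ∞, where s is the scale function of a regular diffusion satisfying Condition C (s(x) = ∫^x exp(∫^y β) dy with β² locally integrable, accessible finite boundaries absorbing). Then conditions (i.a) '|b| < ∞ and ∫_B |x−b| β(x)² dx < ∞' and (i.b) '|s(b)| = ∞ and the other boundary satisfies (i.a)' are mutually exclusive, i.e., cannot both hold at the same boundary point. -/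
/-!
Near `l`, integrating the pointwise AM–GM bound `2|β z| ≤ (z - l) β(z)² + (z - l)⁻¹`
over `[y, m]` gives `-∫_y^m β ≤ (C + log ((m - l) / (y - l))) / 2`, where
`C = ∫_l^m (z - l) β²` is finite by assumption. Hence `s' y = exp (∫_c^y β)` is
`O((y - l)^(-1/2))`, integrable at `l`, so `s` has a finite limit there. The right endpoint
reduces to the left one under `x ↦ -x`.
-/

open MeasureTheory Set Filter Topology Real

theorem two_mul_abs_le_mul_sq_add_inv {t : ℝ} (ht : 0 < t) (x : ℝ) :
    2 * |x| ≤ t * x ^ 2 + t⁻¹ := by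
  have hsq : t * (t * x ^ 2 + t⁻¹ - 2 * |x|) = (t * |x| - 1) ^ 2 := by
    field_simp
    rw [← sq_abs x]
    ring
  nlinarith [sq_nonneg (t * |x| - 1)]

theorem MeasureTheory.LocallyIntegrableOn.of_sq {X : Type*} [MeasurableSpace X]
    [TopologicalSpace X] {μ : Measure X} [IsLocallyFiniteMeasure μ] {U : Set X} {f : X → ℝ}
    (hf : AEStronglyMeasurable f μ) (h : LocallyIntegrableOn (fun x => f x ^ 2) U μ) :
    LocallyIntegrableOn f U μ :=
  ((locallyIntegrableOn_const 1).add h).mono hf <| ae_of_all _ fun x => by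
    simp only [Pi.add_apply, Real.norm_eq_abs]
    rw [abs_of_nonneg (by positivity : (0 : ℝ) ≤ 1 + f x ^ 2)]
    nlinarith [sq_abs (f x), sq_nonneg (|f x| - 1)]

theorem MeasureTheory.LocallyIntegrableOn.intervalIntegrable_of_ordConnected {E : Type*}
    [NormedAddCommGroup E] {f : ℝ → E} {U : Set ℝ} (hf : LocallyIntegrableOn f U)
    (hU : U.OrdConnected) {u v : ℝ} (hu : u ∈ U) (hv : v ∈ U) :
    IntervalIntegrable f volume u v :=
  (hf.integrableOn_compact_subset (hU.uIcc_subset hu hv) isCompact_uIcc).intervalIntegrable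

theorem intervalIntegrable_of_setLIntegral_Ioo_lt_top {f : ℝ → ℝ} {a b : ℝ} (hab : a ≤ b)
    (hf : AEStronglyMeasurable f) (hf₀ : 0 ≤ f)
    (h : ∫⁻ x in Ioo a b, ENNReal.ofReal (f x) < ⊤) : IntervalIntegrable f volume a b :=
  (intervalIntegrable_iff_integrableOn_Ioo_of_le hab).2
    ⟨hf.restrict, (hasFiniteIntegral_iff_ofReal (ae_of_all _ hf₀)).2 h⟩

theorem continuousOn_primitive_of_forall_intervalIntegrable {E : Type*} [NormedAddCommGroup E]
    [NormedSpace ℝ E] {f : ℝ → E} {l r c : ℝ} (hc : c ∈ Ioo l r)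
    (hf : ∀ u ∈ Ioo l r, ∀ v ∈ Ioo l r, IntervalIntegrable f volume u v) :
    ContinuousOn (fun x => ∫ t in c..x, f t) (Ioo l r) := by
  intro x hx
  obtain ⟨u, hlu, hux, hu⟩ : ∃ u, l < u ∧ u < x ∧ u ≤ c :=
    ⟨min c ((l + x) / 2), lt_min hc.1 (by linarith [hx.1]),
      (min_le_right _ _).trans_lt (by linarith [hx.1]), min_le_left _ _⟩
  obtain ⟨v, hxv, hvr, hv⟩ : ∃ v, x < v ∧ v < r ∧ c ≤ v :=
    ⟨max c ((x + r) / 2), (by linarith [hx.2] : x < (x + r) / 2).trans_le (le_max_right _ _),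
      max_lt hc.2 (by linarith [hx.2]), le_max_left _ _⟩
  have hcont := intervalIntegral.continuousOn_primitive_interval'
    (hf u ⟨hlu, hux.trans hx.2⟩ v ⟨hx.1.trans hxv, hvr⟩)
    (by rw [uIcc_of_le (hu.trans hv)]; exact ⟨hu, hv⟩)
  rw [uIcc_of_le (hu.trans hv)] at hcont
  exact (hcont.continuousAt (Icc_mem_nhds hux hxv)).continuousWithinAt

theorem tendsto_integral_nhdsGT_of_integrableOn_Ioc {E : Type*} [NormedAddCommGroup E]
    [NormedSpace ℝ E] {g : ℝ → E} {l m c : ℝ} (hlm : l < m) (hg : IntegrableOn g (Ioc l m))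
    (hcm : IntervalIntegrable g volume c m) :
    Tendsto (fun x => ∫ y in c..x, g y) (𝓝[>] l) (𝓝 (∫ y in c..l, g y)) := by
  have hlm' : IntervalIntegrable g volume l m :=
    (intervalIntegrable_iff_integrableOn_Ioc_of_le hlm.le).2 hg
  have hcont : Tendsto (fun x => ∫ y in l..x, g y) (𝓝[>] l) (𝓝 (∫ y in l..l, g y)) := by
    have := intervalIntegral.continuousOn_primitive_interval' hlm' left_mem_uIcc l left_mem_uIcc
    rw [uIcc_of_le hlm.le] at this
    exact this.tendsto.mono_left (by
      rw [← nhdsWithin_Ioo_eq_nhdsGT hlm]; exact nhdsWithin_mono _ Ioo_subset_Icc_self)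
  rw [intervalIntegral.integral_same] at hcont
  have hsplit :
      ∀ᶠ x in 𝓝[>] l, (∫ y in c..l, g y) + (∫ y in l..x, g y) = ∫ y in c..x, g y := by
    filter_upwards [Ioo_mem_nhdsGT hlm] with x hx
    exact intervalIntegral.integral_add_adjacent_intervals (hcm.trans hlm'.symm)
      (hlm'.mono_set (uIcc_subset_uIcc_left
        (by rw [uIcc_of_le hlm.le]; exact ⟨hx.1.le, hx.2.le⟩)))
  simpa using (tendsto_const_nhds.add hcont).congr' hsplit

theorem two_mul_integral_abs_le {β : ℝ → ℝ} {l y m : ℝ} (hly : l < y) (hym : y ≤ m)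
    (hβ : IntervalIntegrable β volume y m)
    (hw : IntervalIntegrable (fun x => |x - l| * β x ^ 2) volume y m) :
    2 * ∫ z in y..m, |β z| ≤
      (∫ z in y..m, |z - l| * β z ^ 2) + log ((m - l) / (y - l)) := by
  have hinv : IntervalIntegrable (fun z => (z - l)⁻¹) volume y m := by
    refine ContinuousOn.intervalIntegrable fun z hz => ?_
    rw [uIcc_of_le hym] at hz
    exact ((continuousAt_id.sub continuousAt_const).inv₀
      (sub_pos.2 (hly.trans_le hz.1)).ne').continuousWithinAt
  calc 2 * ∫ z in y..m, |β z| = ∫ z in y..m, 2 * |β z| :=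
        (intervalIntegral.integral_const_mul _ _).symm
    _ ≤ ∫ z in y..m, (|z - l| * β z ^ 2 + (z - l)⁻¹) :=
      intervalIntegral.integral_mono_on hym (hβ.abs.const_mul 2) (hw.add hinv) fun z hz => by
        rw [abs_of_pos (by linarith [hz.1] : 0 < z - l)]
        exact two_mul_abs_le_mul_sq_add_inv (by linarith [hz.1]) _
    _ = (∫ z in y..m, |z - l| * β z ^ 2) + log ((m - l) / (y - l)) := by
      rw [intervalIntegral.integral_add hw hinv,
        intervalIntegral.integral_comp_sub_right (fun z => z⁻¹),
        integral_inv_of_pos (by linarith) (by linarith)]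

theorem exists_exp_primitive_le_mul_rpow {β : ℝ → ℝ} {l m c : ℝ} (hlm : l < m)
    (hβ : ∀ y ∈ Ioc l m, IntervalIntegrable β volume c y)
    (hw : IntervalIntegrable (fun x => |x - l| * β x ^ 2) volume l m) :
    ∃ K, ∀ y ∈ Ioc l m, exp (∫ z in c..y, β z) ≤ K * (y - l) ^ (-(1 / 2) : ℝ) := by
  set W := ∫ x in l..m, |x - l| * β x ^ 2
  refine ⟨exp ((∫ z in c..m, β z) + W / 2) * (m - l) ^ (1 / 2 : ℝ), fun y hy => ?_⟩
  have hym : IntervalIntegrable β volume y m := (hβ y hy).symm.trans (hβ m ⟨hlm, le_rfl⟩)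
  have hwy : IntervalIntegrable (fun x => |x - l| * β x ^ 2) volume y m :=
    hw.mono_set (by rw [uIcc_of_le hy.2, uIcc_of_le hlm.le]; exact Icc_subset_Icc_left hy.1.le)
  have hW : ∫ z in y..m, |z - l| * β z ^ 2 ≤ W :=
    intervalIntegral.integral_mono_interval hy.1.le hy.2 le_rfl
      (ae_of_all _ fun x => by positivity) hw
  have hbound : -∫ z in y..m, β z ≤ (W + log ((m - l) / (y - l))) / 2 := by
    have := two_mul_integral_abs_le hy.1 hy.2 hym hwy
    have := intervalIntegral.abs_integral_le_integral_abs (f := β) (μ := volume) hy.2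
    linarith [neg_le_abs (∫ z in y..m, β z)]
  have hsplit : ∫ z in c..y, β z = (∫ z in c..m, β z) - ∫ z in y..m, β z := by
    rw [← intervalIntegral.integral_add_adjacent_intervals (hβ y hy) hym]
    ring
  have hq : 0 < (m - l) / (y - l) := div_pos (by linarith) (by linarith [hy.1])
  have hsqrt :
      exp (log ((m - l) / (y - l)) / 2) = (m - l) ^ (1 / 2 : ℝ) * (y - l) ^ (-(1 / 2) : ℝ) := by
    rw [rpow_neg (by linarith [hy.1]), ← div_eq_mul_inv,
      ← div_rpow (by linarith) (by linarith [hy.1]), rpow_def_of_pos hq]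
    ring_nf
  calc exp (∫ z in c..y, β z)
      ≤ exp ((∫ z in c..m, β z) + W / 2 + log ((m - l) / (y - l)) / 2) := by
        rw [hsplit]; gcongr; linarith
    _ = _ := by rw [exp_add, hsqrt]; ring

theorem exists_tendsto_integral_exp_primitive_nhdsGT {β : ℝ → ℝ} {l r c a : ℝ}
    (hc : c ∈ Ioo l r) (ha : a ∈ Ioo l r)
    (hβ : ∀ u ∈ Ioo l r, ∀ v ∈ Ioo l r, IntervalIntegrable β volume u v)
    (hw : IntervalIntegrable (fun x => |x - l| * β x ^ 2) volume l a) :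
    ∃ L, Tendsto (fun x => ∫ y in c..x, exp (∫ z in c..y, β z)) (𝓝[>] l) (𝓝 L) := by
  have hcont : ContinuousOn (fun y => exp (∫ z in c..y, β z)) (Ioo l r) :=
    continuous_exp.comp_continuousOn (continuousOn_primitive_of_forall_intervalIntegrable hc hβ)
  obtain ⟨K, hK⟩ := exists_exp_primitive_le_mul_rpow ha.1
    (fun y hy => hβ c hc y ⟨hy.1, hy.2.trans_lt ha.2⟩) hw
  have hmaj : IntegrableOn (fun y => K * (y - l) ^ (-(1 / 2) : ℝ)) (Ioc l a) := by
    rw [← intervalIntegrable_iff_integrableOn_Ioc_of_le ha.1.le]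
    simpa using ((intervalIntegral.intervalIntegrable_rpow' (a := l - l) (b := a - l)
      (by norm_num : (-1 : ℝ) < -(1 / 2))).comp_sub_right l).const_mul K
  have hg : IntegrableOn (fun y => exp (∫ z in c..y, β z)) (Ioc l a) :=
    hmaj.mono'
      ((hcont.mono (Ioc_subset_Ioo_right ha.2)).aestronglyMeasurable measurableSet_Ioc)
      ((ae_restrict_iff' measurableSet_Ioc).2 (ae_of_all _ fun y hy => by
        rw [norm_of_nonneg (exp_pos _).le]; exact hK y hy))
  exact ⟨_, tendsto_integral_nhdsGT_of_integrableOn_Ioc ha.1 hg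
    ((hcont.mono (ordConnected_Ioo.uIcc_subset hc ha)).intervalIntegrable)⟩

theorem integral_exp_primitive_eq_neg_comp_neg (β : ℝ → ℝ) (c x : ℝ) :
    ∫ y in c..x, exp (∫ z in c..y, β z) =
      -∫ y in -c..-x, exp (∫ z in -c..y, -β (-z)) := by
  have inner : ∀ y, ∫ z in -c..y, -β (-z) = ∫ z in c..-y, β z := fun y => by
    rw [intervalIntegral.integral_neg, intervalIntegral.integral_comp_neg (fun z => β z), neg_neg,
      intervalIntegral.integral_symm, neg_neg]
  simp_rw [inner]
  rw [intervalIntegral.integral_comp_neg (fun y => exp (∫ z in c..y, β z)), neg_neg, neg_neg,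
    intervalIntegral.integral_symm]

theorem exists_tendsto_integral_exp_primitive_nhdsLT {β : ℝ → ℝ} {l r c a : ℝ}
    (hc : c ∈ Ioo l r) (ha : a ∈ Ioo l r)
    (hβ : ∀ u ∈ Ioo l r, ∀ v ∈ Ioo l r, IntervalIntegrable β volume u v)
    (hw : IntervalIntegrable (fun x => |x - r| * β x ^ 2) volume a r) :
    ∃ L, Tendsto (fun x => ∫ y in c..x, exp (∫ z in c..y, β z)) (𝓝[<] r) (𝓝 L) := by
  have hneg : ∀ {x}, x ∈ Ioo (-r) (-l) → -x ∈ Ioo l r := fun hx =>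
    ⟨by linarith [hx.2], by linarith [hx.1]⟩
  have hβ' : ∀ u ∈ Ioo (-r) (-l), ∀ v ∈ Ioo (-r) (-l),
      IntervalIntegrable (fun z => -β (-z)) volume u v := fun u hu v hv => by
    simpa [Pi.neg_def] using
      ((IntervalIntegrable.iff_comp_neg (f := _)).1 (hβ (-u) (hneg hu) (-v) (hneg hv))).neg
  have hw' : IntervalIntegrable (fun x => |x - -r| * (-β (-x)) ^ 2) volume (-r) (-a) := by
    convert ((IntervalIntegrable.iff_comp_neg (f := _)).1 hw).symm using 2 with x
    rw [neg_sq, ← abs_neg (-x - r)]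
    ring_nf
  obtain ⟨L, hL⟩ := exists_tendsto_integral_exp_primitive_nhdsGT
    ⟨neg_lt_neg hc.2, neg_lt_neg hc.1⟩ ⟨neg_lt_neg ha.2, neg_lt_neg ha.1⟩ hβ' hw'
  refine ⟨-L, (hL.comp tendsto_neg_nhdsLT).neg.congr fun x => ?_⟩
  simp [integral_exp_primitive_eq_neg_comp_neg β c x]

theorem stmt15_general (l r c a b : ℝ) (hc : c ∈ Ioo l r) (ha : a ∈ Ioo l r)
    (β : ℝ → ℝ) (hβ : Measurable β)
    (hloc : LocallyIntegrableOn (fun x => (β x) ^ 2) (Ioo l r) volume)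
    (s : ℝ → ℝ)
    (hs : ∀ x ∈ Ioo l r, s x = ∫ y in c..x, Real.exp (∫ z in c..y, β z))
    (B : Set ℝ)
    (hB : (b = l ∧ B = Ioo l a) ∨ (b = r ∧ B = Ioo a r)) :
    ¬ ((∫⁻ x in B, ENNReal.ofReal (|x - b| * (β x) ^ 2) < ⊤) ∧
        ¬ (∃ L : ℝ, Tendsto s (nhdsWithin b B) (nhds L))) := by
  rintro ⟨hfin, hno_limit⟩
  have hβint : ∀ u ∈ Ioo l r, ∀ v ∈ Ioo l r, IntervalIntegrable β volume u v :=
    fun _ hu _ hv => (hloc.of_sq hβ.aestronglyMeasurable).intervalIntegrable_of_ordConnected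
      ordConnected_Ioo hu hv
  have hw {x₀ x₁ : ℝ} (h : x₀ ≤ x₁)
      (hlt : ∫⁻ x in Ioo x₀ x₁, ENNReal.ofReal (|x - b| * β x ^ 2) < ⊤) :
      IntervalIntegrable (fun x => |x - b| * β x ^ 2) volume x₀ x₁ :=
    intervalIntegrable_of_setLIntegral_Ioo_lt_top h (by fun_prop) (fun x => by positivity) hlt
  have hBsub : B ⊆ Ioo l r := by
    rcases hB with ⟨-, rfl⟩ | ⟨-, rfl⟩
    exacts [Ioo_subset_Ioo_right ha.2.le, Ioo_subset_Ioo_left ha.1.le]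
  have hsB : s =ᶠ[𝓝[B] b] fun x => ∫ y in c..x, exp (∫ z in c..y, β z) := by
    filter_upwards [self_mem_nhdsWithin] with x hx using hs x (hBsub hx)
  refine hno_limit ?_
  rcases hB with ⟨rfl, rfl⟩ | ⟨rfl, rfl⟩
  · obtain ⟨L, hL⟩ :=
      exists_tendsto_integral_exp_primitive_nhdsGT hc ha hβint (hw ha.1.le hfin)
    exact ⟨L, (hL.mono_left (nhdsWithin_mono _ Ioo_subset_Ioi_self)).congr' hsB.symm⟩
  · obtain ⟨L, hL⟩ :=
      exists_tendsto_integral_exp_primitive_nhdsLT hc ha hβint (hw ha.2.le hfin)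
    exact ⟨L, (hL.mono_left (nhdsWithin_mono _ Ioo_subset_Iio_self)).congr' hsB.symm⟩

/-- Under Condition C (`s(x) = ∫_c^x exp(∫_c^y β) dy` with `β²` locally
integrable), for a finite boundary point `b ∈ {l, r}`, the conditions
(i.a) "`|b| < ∞` and `∫_B |x − b| β(x)² dx < ∞`" and
(i.b) "`|s(b)| = ∞` (and the other boundary satisfies (i.a))"
are mutually exclusive at `b`: it cannot happen that simultaneously
`∫_B |x − b| β(x)² dx < ∞` and `s` has no finite limit at `b` (i.e. `|s(b)| = ∞`). -/
theorem stmt15 (l r c a b : ℝ) (hlr : l < r) (hc : c ∈ Ioo l r) (ha : a ∈ Ioo l r)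
    (β : ℝ → ℝ) (hβ : Measurable β)
    (hloc : LocallyIntegrableOn (fun x => (β x) ^ 2) (Ioo l r) volume)
    (s : ℝ → ℝ)
    (hs : ∀ x ∈ Ioo l r, s x = ∫ y in c..x, Real.exp (∫ z in c..y, β z))
    (B : Set ℝ)
    (hB : (b = l ∧ B = Ioo l a) ∨ (b = r ∧ B = Ioo a r)) :
    ¬ ((∫⁻ x in B, ENNReal.ofReal (|x - b| * (β x) ^ 2) < ⊤) ∧
        ¬ (∃ L : ℝ, Tendsto s (nhdsWithin b B) (nhds L))) :=
  stmt15_general l r c a b hc ha β hβ hloc s hs B hB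
end

section
/- Let s(x) = ∫_c^x exp(∫_c^y β(z) dz) dy on (l, r) with β² locally integrable, let m be a speed measure, and let b ∈ {l, r} be finite with ∫_B |x − b| β(x)² dx < ∞ for some open interval B with endpoint b. Then |s(b)| < ∞, and the boundary b satisfies Feller's accessibility criterion for the diffusion with speed measure m and scale s if and only if it satisfies Feller's accessibility criterion for the diffusion in natural scale with speed measure s'·dm. -/
open MeasureTheory Set Filter
open scoped ENNReal NNReal

/-- Substitution `x ↦ -x` for lintegrals over `Ioo` against a mapped measure. -/
lemma lint_neg_aux (μ : Measure ℝ) (u v : ℝ) (f : ℝ → ℝ≥0∞) :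
    ∫⁻ x in Ioo (-v) (-u), f x ∂(Measure.map Neg.neg μ) = ∫⁻ x in Ioo u v, f (-x) ∂μ := by
  rw [Measure.restrict_map measurable_neg measurableSet_Ioo]
  have hpre : (Neg.neg : ℝ → ℝ) ⁻¹' (Ioo (-v) (-u)) = Ioo u v := by
    ext z
    simp only [mem_preimage, mem_Ioo]
    constructor <;> (intro hz; constructor <;> linarith [hz.1, hz.2])
  rw [hpre]
  have : Measure.map (Neg.neg : ℝ → ℝ) (μ.restrict (Ioo u v))
      = Measure.map (MeasurableEquiv.neg ℝ) (μ.restrict (Ioo u v)) := rfl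
  rw [this, lintegral_map_equiv]
  rfl

/-- The core one-sided (right boundary) version of the statement. -/
lemma aux16 (l r c a : ℝ) (hc : c ∈ Ioo l r) (ha : a ∈ Ioo l r)
    (β : ℝ → ℝ) (hβ : Measurable β)
    (hβint : ∀ u v : ℝ, l < u → u ≤ v → v < r →
      IntegrableOn (fun z => (β z) ^ 2) (Icc u v) volume)
    (s s' : ℝ → ℝ)
    (hs : ∀ x ∈ Ioo l r, s x = ∫ y in c..x, Real.exp (∫ z in c..y, β z))
    (hs' : ∀ x ∈ Ioo l r, s' x = Real.exp (∫ z in c..x, β z))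
    (mSpeed : Measure ℝ)
    (hgood : ∫⁻ x in Ioo a r, ENNReal.ofReal (|x - r| * (β x) ^ 2) < ⊤) :
    ∃ sb : ℝ, Tendsto s (nhdsWithin r (Ioo a r)) (nhds sb) ∧
      ((∫⁻ x in Ioo a r, ENNReal.ofReal |sb - s x| ∂mSpeed < ⊤) ↔
        (∫⁻ x in Ioo a r, ENNReal.ofReal (|r - x| * s' x) ∂mSpeed < ⊤)) := by
  obtain ⟨hlc, hcr⟩ := hc
  obtain ⟨hla, har⟩ := ha
  set G : ℝ → ℝ := fun y => ∫ z in c..y, β z with hGdef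
  set g : ℝ → ℝ := fun y => Real.exp (G y) with hgdef
  have hgpos : ∀ y, 0 < g y := fun y => Real.exp_pos _
  -- interval integrability of β
  have hβi : ∀ u v : ℝ, u ∈ Ioo l r → v ∈ Ioo l r → IntervalIntegrable β volume u v := by
    intro u v hu hv
    apply IntegrableOn.intervalIntegrable
    have h2 : IntegrableOn (fun z => (β z) ^ 2) (Icc (min u v) (max u v)) volume :=
      hβint _ _ (lt_min hu.1 hv.1) min_le_max (max_lt hu.2 hv.2)
    have hone : IntegrableOn (fun _ : ℝ => (1:ℝ)) (Icc (min u v) (max u v)) volume :=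
      integrableOn_const measure_Icc_lt_top.ne
    have hbdInt : IntegrableOn (fun z => (1 + β z ^ 2) / 2) (Icc (min u v) (max u v)) volume :=
      (hone.add h2).div_const 2
    have hmono : IntegrableOn β (Icc (min u v) (max u v)) volume := by
      refine Integrable.mono' hbdInt
        hβ.aestronglyMeasurable.restrict (ae_of_all _ fun z => ?_)
      have : |β z| ≤ (1 + β z ^ 2) / 2 := by nlinarith [sq_nonneg (|β z| - 1), sq_abs (β z)]
      simpa [Real.norm_eq_abs] using this
    exact hmono
  have hGadd : ∀ u ∈ Ioo l r, ∀ v ∈ Ioo l r, G v - G u = ∫ z in u..v, β z := by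
    intro u hu v hv
    have h := intervalIntegral.integral_add_adjacent_intervals
      (hβi c u ⟨hlc, hcr⟩ hu) (hβi u v hu hv)
    simp only [hGdef]
    linarith [h]
  have hGca : ∀ x ∈ Ioo l r, ContinuousAt G x := by
    intro x hx
    obtain ⟨u, hu1, hu2⟩ := exists_between hx.1
    obtain ⟨v, hv1, hv2⟩ := exists_between hx.2
    have huv : u ≤ v := by linarith
    have hu' : u ∈ Ioo l r := ⟨hu1, by linarith⟩
    have hv' : v ∈ Ioo l r := ⟨by linarith, hv2⟩
    have hcont : ContinuousOn (fun t => ∫ z in u..t, β z) (uIcc u v) :=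
      intervalIntegral.continuousOn_primitive_interval' (hβi u v hu' hv')
        (by rw [uIcc_of_le huv]; exact ⟨le_rfl, huv⟩)
    have heq : EqOn G (fun t => G u + ∫ z in u..t, β z) (uIcc u v) := by
      intro t ht
      rw [uIcc_of_le huv] at ht
      have ht' : t ∈ Ioo l r := ⟨lt_of_lt_of_le hu'.1 ht.1, lt_of_le_of_lt ht.2 hv'.2⟩
      have := hGadd u hu' t ht'
      simp only []
      linarith
    have hGcont : ContinuousOn G (uIcc u v) :=
      ContinuousOn.congr (continuousOn_const.add hcont) heq
    have hmem : uIcc u v ∈ nhds x := by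
      rw [uIcc_of_le huv]; exact Icc_mem_nhds hu2 hv1
    exact hGcont.continuousAt hmem
  have hgca : ∀ x ∈ Ioo l r, ContinuousAt g x := fun x hx =>
    Real.continuous_exp.continuousAt.comp (hGca x hx)
  have hgcOn : ∀ S : Set ℝ, S ⊆ Ioo l r → ContinuousOn g S := fun S hS x hx =>
    (hgca x (hS hx)).continuousWithinAt
  have huIccsub : ∀ u v : ℝ, u ∈ Ioo l r → v ∈ Ioo l r → uIcc u v ⊆ Ioo l r := by
    intro u v hu hv t ht
    exact ⟨lt_of_lt_of_le (lt_min hu.1 hv.1) ht.1, lt_of_le_of_lt ht.2 (max_lt hu.2 hv.2)⟩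
  have hgi : ∀ u v : ℝ, u ∈ Ioo l r → v ∈ Ioo l r → IntervalIntegrable g volume u v :=
    fun u v hu hv => (hgcOn _ (huIccsub u v hu hv)).intervalIntegrable
  have hsd : ∀ u ∈ Ioo l r, ∀ v ∈ Ioo l r, s v - s u = ∫ t in u..v, g t := by
    intro u hu v hv
    rw [hs u hu, hs v hv]
    have h := intervalIntegral.integral_add_adjacent_intervals
      (hgi c u ⟨hlc, hcr⟩ hu) (hgi u v hu hv)
    simp only [hgdef, hGdef] at h ⊢
    linarith
  -- the weight function and its total mass
  set w : ℝ → ℝ := fun z => (r - z) * β z ^ 2 with hwdef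
  have hwmeas : Measurable w := (measurable_const.sub measurable_id).mul (hβ.pow_const 2)
  have hwInt : IntegrableOn w (Ioo a r) volume := by
    constructor
    · exact hwmeas.aestronglyMeasurable.restrict
    · rw [hasFiniteIntegral_iff_norm]
      have heq : ∫⁻ x in Ioo a r, ENNReal.ofReal ‖w x‖ ∂volume
          = ∫⁻ x in Ioo a r, ENNReal.ofReal (|x - r| * β x ^ 2) ∂volume := by
        apply setLIntegral_congr_fun measurableSet_Ioo
        intro x hx
        congr 1
        rw [hwdef]
        simp only [Real.norm_eq_abs]
        rw [abs_mul, abs_of_nonneg (sq_nonneg (β x)), abs_sub_comm x r]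
      rw [heq]
      exact hgood
  set ε : ℝ := ∫ z in Ioo a r, w z with hεdef
  have hε0 : 0 ≤ ε := setIntegral_nonneg measurableSet_Ioo
    (fun z hz => mul_nonneg (by linarith [hz.2]) (sq_nonneg _))
  set K : ℝ := Real.exp (ε / 2) with hKdef
  have hKpos : 0 < K := Real.exp_pos _
  -- the key integral bound
  have key : ∀ x y : ℝ, a ≤ x → x ≤ y → y < r →
      |∫ z in x..y, β z| ≤ ε / 2 + 1 / 2 * Real.log ((r - x) / (r - y)) := by
    intro x y hax hxy hyr
    have hxr : x < r := lt_of_le_of_lt hxy hyr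
    have hx' : x ∈ Ioo l r := ⟨by linarith, hxr⟩
    have hy' : y ∈ Ioo l r := ⟨by linarith, hyr⟩
    have hIocsub : Ioc x y ⊆ Ioo a r := fun z hz => ⟨lt_of_le_of_lt hax hz.1, lt_of_le_of_lt hz.2 hyr⟩
    have hwiv : IntervalIntegrable w volume x y := by
      rw [intervalIntegrable_iff_integrableOn_Ioc_of_le hxy]
      exact hwInt.mono_set hIocsub
    have hβiv := hβi x y hx' hy'
    have hinviv : IntervalIntegrable (fun z => (r - z)⁻¹) volume x y := by
      apply ContinuousOn.intervalIntegrable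
      apply ContinuousOn.inv₀ (continuous_const.sub continuous_id).continuousOn
      intro z hz
      rw [uIcc_of_le hxy] at hz
      exact ne_of_gt (by linarith [hz.2] : (0:ℝ) < r - z)
    have h1 : |∫ z in x..y, β z| ≤ ∫ z in x..y, |β z| :=
      intervalIntegral.abs_integral_le_integral_abs hxy
    have h2 : ∫ z in x..y, |β z| ≤ ∫ z in x..y, (w z + (r - z)⁻¹) / 2 := by
      apply intervalIntegral.integral_mono_on hxy hβiv.abs ((hwiv.add hinviv).div_const 2)
      intro z hz
      have hrz : 0 < r - z := by linarith [hz.2]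
      have hinv : 0 < (r - z)⁻¹ := inv_pos.2 hrz
      have hcancel : (r - z) * (r - z)⁻¹ = 1 := mul_inv_cancel₀ (ne_of_gt hrz)
      have habs : β z ^ 2 = |β z| ^ 2 := (sq_abs _).symm
      rw [hwdef]
      simp only []
      have hne : r - z ≠ 0 := ne_of_gt hrz
      have hfact : 0 ≤ (r - z) * |β z| ^ 2 - 2 * |β z| + (r - z)⁻¹ := by
        have hnn := mul_nonneg hinv.le (sq_nonneg ((r - z) * |β z| - 1))
        have hexp : (r - z)⁻¹ * ((r - z) * |β z| - 1) ^ 2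
            = (r - z) * |β z| ^ 2 - 2 * |β z| + (r - z)⁻¹ := by
          have h2 : (r - z)⁻¹ * (r - z) = 1 := inv_mul_cancel₀ hne
          linear_combination ((r - z) * |β z| ^ 2 - 2 * |β z|) * h2
        linarith [hexp ▸ hnn]
      rw [habs]
      linarith
    have h3 : ∫ z in x..y, w z ≤ ε := by
      rw [intervalIntegral.integral_of_le hxy, hεdef]
      apply setIntegral_mono_set hwInt
      · filter_upwards [ae_restrict_mem measurableSet_Ioo] with z hz
        exact mul_nonneg (by linarith [hz.2]) (sq_nonneg _)
      · exact HasSubset.Subset.eventuallyLE hIocsub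
    have h4 : ∫ z in x..y, (r - z)⁻¹ = Real.log ((r - x) / (r - y)) := by
      have hcs := intervalIntegral.integral_comp_sub_left (a := x) (b := y)
        (fun z => z⁻¹) r
      rw [hcs]
      exact integral_inv_of_pos (by linarith) (by linarith)
    have h5 : ∫ z in x..y, (w z + (r - z)⁻¹) / 2
        = ((∫ z in x..y, w z) + ∫ z in x..y, (r - z)⁻¹) / 2 := by
      rw [intervalIntegral.integral_div, intervalIntegral.integral_add hwiv hinviv]
    calc |∫ z in x..y, β z| ≤ ∫ z in x..y, |β z| := h1
      _ ≤ ∫ z in x..y, (w z + (r - z)⁻¹) / 2 := h2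
      _ = ((∫ z in x..y, w z) + ∫ z in x..y, (r - z)⁻¹) / 2 := h5
      _ ≤ ε / 2 + 1 / 2 * Real.log ((r - x) / (r - y)) := by rw [h4]; linarith
  -- pointwise comparison of g
  have hsqrt_exp : ∀ q : ℝ, 0 < q → Real.exp (1 / 2 * Real.log q) = Real.sqrt q := by
    intro q hq
    rw [Real.sqrt_eq_rpow, Real.rpow_def_of_pos hq, mul_comm]
  have hgub : ∀ x y : ℝ, a ≤ x → x ≤ y → y < r →
      g y ≤ g x * K * (Real.sqrt (r - x) / Real.sqrt (r - y)) := by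
    intro x y hax hxy hyr
    have hxr : x < r := lt_of_le_of_lt hxy hyr
    have hx' : x ∈ Ioo l r := ⟨by linarith, hxr⟩
    have hy' : y ∈ Ioo l r := ⟨by linarith, hyr⟩
    have hq : 0 < (r - x) / (r - y) := div_pos (by linarith) (by linarith)
    have hGd : G y - G x ≤ ε / 2 + 1 / 2 * Real.log ((r - x) / (r - y)) := by
      have h := key x y hax hxy hyr
      have h2 := hGadd x hx' y hy'
      calc G y - G x = ∫ z in x..y, β z := h2
        _ ≤ |∫ z in x..y, β z| := le_abs_self _
        _ ≤ _ := h
    have hgy : g y = g x * Real.exp (G y - G x) := by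
      simp only [hgdef]
      rw [← Real.exp_add]
      congr 1
      ring
    rw [hgy]
    have hexp : Real.exp (G y - G x) ≤ K * (Real.sqrt (r - x) / Real.sqrt (r - y)) := by
      have h2 : Real.exp (G y - G x)
          ≤ Real.exp (ε / 2 + 1 / 2 * Real.log ((r - x) / (r - y))) := Real.exp_le_exp.2 hGd
      rw [Real.exp_add, hsqrt_exp _ hq, Real.sqrt_div (by linarith : (0:ℝ) ≤ r - x)] at h2
      exact h2
    calc g x * Real.exp (G y - G x) ≤ g x * (K * (Real.sqrt (r - x) / Real.sqrt (r - y))) :=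
          mul_le_mul_of_nonneg_left hexp (hgpos x).le
      _ = g x * K * (Real.sqrt (r - x) / Real.sqrt (r - y)) := by ring
  have hglb : ∀ x y : ℝ, a ≤ x → x ≤ y → y < r →
      g x * K⁻¹ * (Real.sqrt (r - y) / Real.sqrt (r - x)) ≤ g y := by
    intro x y hax hxy hyr
    have hxr : x < r := lt_of_le_of_lt hxy hyr
    have hx' : x ∈ Ioo l r := ⟨by linarith, hxr⟩
    have hy' : y ∈ Ioo l r := ⟨by linarith, hyr⟩
    have hq : 0 < (r - x) / (r - y) := div_pos (by linarith) (by linarith)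
    have hGd : -(ε / 2) - 1 / 2 * Real.log ((r - x) / (r - y)) ≤ G y - G x := by
      have h := key x y hax hxy hyr
      have h2 := hGadd x hx' y hy'
      have h3 := neg_abs_le (∫ z in x..y, β z)
      rw [h2]
      linarith
    have hgy : g y = g x * Real.exp (G y - G x) := by
      simp only [hgdef]
      rw [← Real.exp_add]
      congr 1
      ring
    rw [hgy]
    have hexp : K⁻¹ * (Real.sqrt (r - y) / Real.sqrt (r - x)) ≤ Real.exp (G y - G x) := by
      have h2 : Real.exp (-(ε / 2) - 1 / 2 * Real.log ((r - x) / (r - y)))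
          ≤ Real.exp (G y - G x) := Real.exp_le_exp.2 hGd
      have h3 : Real.exp (-(ε / 2) - 1 / 2 * Real.log ((r - x) / (r - y)))
          = K⁻¹ * (Real.sqrt (r - y) / Real.sqrt (r - x)) := by
        rw [sub_eq_add_neg, Real.exp_add, Real.exp_neg, Real.exp_neg, hKdef]
        congr 1
        rw [hsqrt_exp _ hq, Real.sqrt_div (by linarith : (0:ℝ) ≤ r - x), inv_div]
      rw [h3] at h2
      exact h2
    calc g x * K⁻¹ * (Real.sqrt (r - y) / Real.sqrt (r - x))
        = g x * (K⁻¹ * (Real.sqrt (r - y) / Real.sqrt (r - x))) := by ring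
      _ ≤ g x * Real.exp (G y - G x) := mul_le_mul_of_nonneg_left hexp (hgpos x).le
  -- integrability of g up to r
  have hrpowInt : ∀ x : ℝ, IntervalIntegrable (fun t => (r - t) ^ (-(1/2) : ℝ)) volume x r := by
    intro x
    have h := (intervalIntegral.intervalIntegrable_rpow'
      (a := r - x) (b := 0) (by norm_num : (-1:ℝ) < -(1/2))).comp_sub_left r
    simpa using h
  have hrpowInt' : ∀ x : ℝ, IntervalIntegrable (fun t => (r - t) ^ ((1/2) : ℝ)) volume x r := by
    intro x
    have h := (intervalIntegral.intervalIntegrable_rpow'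
      (a := r - x) (b := 0) (by norm_num : (-1:ℝ) < (1/2))).comp_sub_left r
    simpa using h
  have hgInt : IntegrableOn g (Ioo a r) volume := by
    have hbd : IntervalIntegrable
        (fun t => g a * K * Real.sqrt (r - a) * (r - t) ^ (-(1/2) : ℝ)) volume a r :=
      (hrpowInt a).const_mul _
    have hbd' : IntegrableOn
        (fun t => g a * K * Real.sqrt (r - a) * (r - t) ^ (-(1/2) : ℝ)) (Ioo a r) volume :=
      ((intervalIntegrable_iff_integrableOn_Ioc_of_le har.le).1 hbd).mono_set Ioo_subset_Ioc_self
    refine Integrable.mono' hbd' ((hgcOn (Ioo a r)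
      (fun z hz => ⟨lt_trans hla hz.1, hz.2⟩)).aestronglyMeasurable measurableSet_Ioo) ?_
    filter_upwards [ae_restrict_mem measurableSet_Ioo] with t ht
    have hub := hgub a t le_rfl ht.1.le ht.2
    have hrt : 0 < r - t := by linarith [ht.2]
    have hconv : Real.sqrt (r - a) / Real.sqrt (r - t)
        = Real.sqrt (r - a) * (r - t) ^ (-(1/2) : ℝ) := by
      rw [Real.rpow_neg hrt.le, ← Real.sqrt_eq_rpow, div_eq_mul_inv]
    rw [Real.norm_eq_abs, abs_of_pos (hgpos t)]
    calc g t ≤ g a * K * (Real.sqrt (r - a) / Real.sqrt (r - t)) := hub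
      _ = g a * K * Real.sqrt (r - a) * (r - t) ^ (-(1/2) : ℝ) := by rw [hconv]; ring
  -- the boundary value of s
  set sb : ℝ := s a + ∫ t in Ioo a r, g t with hsbdef
  have haIoo : a ∈ Ioo l r := ⟨hla, har⟩
  have hDx : ∀ x ∈ Ioo a r, sb - s x = ∫ t in Ioo x r, g t := by
    intro x hx
    have hx' : x ∈ Ioo l r := ⟨lt_trans hla hx.1, hx.2⟩
    have hsx : s x - s a = ∫ t in Ioc a x, g t := by
      rw [← intervalIntegral.integral_of_le hx.1.le]
      exact hsd a haIoo x hx'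
    have hsplit : ∫ t in Ioo a r, g t = (∫ t in Ioc a x, g t) + ∫ t in Ioo x r, g t := by
      rw [← Ioc_union_Ioo_eq_Ioo hx.1.le hx.2]
      apply setIntegral_union
      · rw [Set.disjoint_left]
        intro t ht1 ht2
        exact absurd ht2.1 (not_lt.2 ht1.2)
      · exact measurableSet_Ioo
      · exact hgInt.mono_set (fun t ht => ⟨ht.1, lt_of_le_of_lt ht.2 hx.2⟩)
      · exact hgInt.mono_set (fun t ht => ⟨lt_trans hx.1 ht.1, ht.2⟩)
    rw [hsbdef, hsplit]
    linarith
  -- explicit integrals of the comparison functions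
  have hI1 : ∀ x : ℝ, x < r →
      ∫ t in Ioo x r, (r - t) ^ (-(1/2) : ℝ) = 2 * Real.sqrt (r - x) := by
    intro x hxr
    rw [← integral_Ioc_eq_integral_Ioo, ← intervalIntegral.integral_of_le hxr.le]
    rw [intervalIntegral.integral_comp_sub_left (fun t => t ^ (-(1/2) : ℝ)) r]
    rw [sub_self]
    rw [integral_rpow (Or.inl (by norm_num : (-1:ℝ) < -(1/2)))]
    rw [Real.zero_rpow (by norm_num : (-(1/2) : ℝ) + 1 ≠ 0)]
    rw [Real.sqrt_eq_rpow]
    norm_num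
    ring
  have hI2 : ∀ x : ℝ, x < r →
      ∫ t in Ioo x r, (r - t) ^ ((1/2) : ℝ) = 2/3 * ((r - x) * Real.sqrt (r - x)) := by
    intro x hxr
    rw [← integral_Ioc_eq_integral_Ioo, ← intervalIntegral.integral_of_le hxr.le]
    rw [intervalIntegral.integral_comp_sub_left (fun t => t ^ ((1/2) : ℝ)) r]
    rw [sub_self]
    rw [integral_rpow (Or.inl (by norm_num : (-1:ℝ) < (1/2)))]
    rw [Real.zero_rpow (by norm_num : (1/2 : ℝ) + 1 ≠ 0)]
    have h32 : ((1:ℝ)/2 + 1) = 3/2 := by norm_num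
    rw [h32]
    have hrx : (0:ℝ) ≤ r - x := by linarith
    have : (r - x) ^ ((3:ℝ)/2) = (r - x) * Real.sqrt (r - x) := by
      rw [Real.sqrt_eq_rpow, show ((3:ℝ)/2) = 1 + 1/2 by norm_num,
        Real.rpow_add' hrx (by norm_num), Real.rpow_one]
    rw [this]
    ring
  -- two-sided comparison of sb - s x with g x * (r - x)
  have hub : ∀ x ∈ Ioo a r, sb - s x ≤ 2 * K * (g x * (r - x)) := by
    intro x hx
    have hrx : 0 < r - x := by linarith [hx.2]
    have hiub : IntegrableOn
        (fun t => g x * K * Real.sqrt (r - x) * (r - t) ^ (-(1/2) : ℝ)) (Ioo x r) volume :=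
      ((intervalIntegrable_iff_integrableOn_Ioc_of_le hx.2.le).1
        ((hrpowInt x).const_mul _)).mono_set Ioo_subset_Ioc_self
    have hmono : ∫ t in Ioo x r, g t
        ≤ ∫ t in Ioo x r, g x * K * Real.sqrt (r - x) * (r - t) ^ (-(1/2) : ℝ) := by
      apply setIntegral_mono_on
        (hgInt.mono_set (fun t ht => ⟨lt_trans hx.1 ht.1, ht.2⟩)) hiub measurableSet_Ioo
      intro t ht
      have hrt : 0 < r - t := by linarith [ht.2]
      have hconv : Real.sqrt (r - x) / Real.sqrt (r - t)
          = Real.sqrt (r - x) * (r - t) ^ (-(1/2) : ℝ) := by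
        rw [Real.rpow_neg hrt.le, ← Real.sqrt_eq_rpow, div_eq_mul_inv]
      calc g t ≤ g x * K * (Real.sqrt (r - x) / Real.sqrt (r - t)) :=
            hgub x t hx.1.le ht.1.le ht.2
        _ = g x * K * Real.sqrt (r - x) * (r - t) ^ (-(1/2) : ℝ) := by rw [hconv]; ring
    have hcomp : ∫ t in Ioo x r, g x * K * Real.sqrt (r - x) * (r - t) ^ (-(1/2) : ℝ)
        = 2 * K * (g x * (r - x)) := by
      rw [integral_const_mul, hI1 x hx.2]
      linear_combination 2 * K * g x * Real.mul_self_sqrt hrx.le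
    rw [hDx x hx]
    calc ∫ t in Ioo x r, g t
        ≤ ∫ t in Ioo x r, g x * K * Real.sqrt (r - x) * (r - t) ^ (-(1/2) : ℝ) := hmono
      _ = 2 * K * (g x * (r - x)) := hcomp
  have hlb : ∀ x ∈ Ioo a r, 2/3 * K⁻¹ * (g x * (r - x)) ≤ sb - s x := by
    intro x hx
    have hrx : 0 < r - x := by linarith [hx.2]
    have hsqx : 0 < Real.sqrt (r - x) := Real.sqrt_pos.2 hrx
    have hilb : IntegrableOn
        (fun t => g x * K⁻¹ / Real.sqrt (r - x) * (r - t) ^ ((1/2) : ℝ)) (Ioo x r) volume :=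
      ((intervalIntegrable_iff_integrableOn_Ioc_of_le hx.2.le).1
        ((hrpowInt' x).const_mul _)).mono_set Ioo_subset_Ioc_self
    have hmono : ∫ t in Ioo x r, g x * K⁻¹ / Real.sqrt (r - x) * (r - t) ^ ((1/2) : ℝ)
        ≤ ∫ t in Ioo x r, g t := by
      apply setIntegral_mono_on hilb
        (hgInt.mono_set (fun t ht => ⟨lt_trans hx.1 ht.1, ht.2⟩)) measurableSet_Ioo
      intro t ht
      have hrt : 0 < r - t := by linarith [ht.2]
      have hconv : (r - t) ^ ((1/2) : ℝ) = Real.sqrt (r - t) := (Real.sqrt_eq_rpow _).symm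
      calc g x * K⁻¹ / Real.sqrt (r - x) * (r - t) ^ ((1/2) : ℝ)
          = g x * K⁻¹ * (Real.sqrt (r - t) / Real.sqrt (r - x)) := by rw [hconv]; ring
        _ ≤ g t := hglb x t hx.1.le ht.1.le ht.2
    have hcomp : ∫ t in Ioo x r, g x * K⁻¹ / Real.sqrt (r - x) * (r - t) ^ ((1/2) : ℝ)
        = 2/3 * K⁻¹ * (g x * (r - x)) := by
      rw [integral_const_mul, hI2 x hx.2]
      field_simp
    rw [hDx x hx]
    calc 2/3 * K⁻¹ * (g x * (r - x))
        = ∫ t in Ioo x r, g x * K⁻¹ / Real.sqrt (r - x) * (r - t) ^ ((1/2) : ℝ) := hcomp.symm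
      _ ≤ ∫ t in Ioo x r, g t := hmono
  have hpos0 : ∀ x ∈ Ioo a r, 0 ≤ sb - s x := by
    intro x hx
    have h := hlb x hx
    have hrx : 0 < r - x := by linarith [hx.2]
    have hnn : 0 ≤ 2/3 * K⁻¹ * (g x * (r - x)) :=
      mul_nonneg (mul_nonneg (by norm_num) (inv_pos.2 hKpos).le)
        (mul_nonneg (hgpos x).le hrx.le)
    linarith
  -- the square-root bound near r, and the limit
  have hC : ∀ x ∈ Ioo a r, |s x - sb| ≤ 2 * K * K * g a * Real.sqrt (r - a) * Real.sqrt (r - x) := by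
    intro x hx
    have h1 := hub x hx
    have h0 := hpos0 x hx
    have h2 := hgub a x le_rfl hx.1.le hx.2
    have hrx : 0 < r - x := by linarith [hx.2]
    have hsqx : 0 < Real.sqrt (r - x) := Real.sqrt_pos.2 hrx
    rw [abs_sub_comm, abs_of_nonneg h0]
    have hsq : Real.sqrt (r - x) * Real.sqrt (r - x) = r - x := Real.mul_self_sqrt hrx.le
    have hgx : g x * (r - x) ≤ K * g a * Real.sqrt (r - a) * Real.sqrt (r - x) := by
      calc g x * (r - x) ≤ g a * K * (Real.sqrt (r - a) / Real.sqrt (r - x)) * (r - x) :=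
            mul_le_mul_of_nonneg_right h2 hrx.le
        _ = K * g a * Real.sqrt (r - a) * ((r - x) / Real.sqrt (r - x)) := by ring
        _ = K * g a * Real.sqrt (r - a) * Real.sqrt (r - x) := by
            rw [Real.div_sqrt]
    have h3 : 2 * K * (g x * (r - x)) ≤ 2 * K * (K * g a * Real.sqrt (r - a) * Real.sqrt (r - x)) :=
      mul_le_mul_of_nonneg_left hgx (by positivity)
    calc sb - s x ≤ 2 * K * (g x * (r - x)) := h1
      _ ≤ 2 * K * (K * g a * Real.sqrt (r - a) * Real.sqrt (r - x)) := h3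
      _ = 2 * K * K * g a * Real.sqrt (r - a) * Real.sqrt (r - x) := by ring
  have hTend : Tendsto s (nhdsWithin r (Ioo a r)) (nhds sb) := by
    rw [tendsto_iff_dist_tendsto_zero]
    have hcont : Tendsto (fun x : ℝ => 2 * K * K * g a * Real.sqrt (r - a) * Real.sqrt (r - x))
        (nhds r) (nhds (2 * K * K * g a * Real.sqrt (r - a) * Real.sqrt (r - r))) := by
      apply Tendsto.const_mul
      exact (Real.continuous_sqrt.comp (continuous_const.sub continuous_id)).tendsto r
    rw [sub_self, Real.sqrt_zero, mul_zero] at hcont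
    exact squeeze_zero' (eventually_nhdsWithin_of_forall fun x _ => dist_nonneg)
      (eventually_nhdsWithin_of_forall fun x hx => by rw [Real.dist_eq]; exact hC x hx)
      (hcont.mono_left nhdsWithin_le_nhds)
  -- the comparison of the two integrands
  have hsub' : Ioo a r ⊆ Ioo l r := fun z hz => ⟨lt_trans hla hz.1, hz.2⟩
  have claimA : ∀ x ∈ Ioo a r, ENNReal.ofReal |sb - s x|
      ≤ ENNReal.ofReal (2 * K) * ENNReal.ofReal (|r - x| * s' x) := by
    intro x hx
    rw [← ENNReal.ofReal_mul (by positivity)]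
    apply ENNReal.ofReal_le_ofReal
    rw [abs_of_nonneg (hpos0 x hx), hs' x (hsub' hx),
      abs_of_nonneg (by linarith [hx.2] : (0:ℝ) ≤ r - x)]
    calc sb - s x ≤ 2 * K * (g x * (r - x)) := hub x hx
      _ = 2 * K * ((r - x) * Real.exp (∫ z in c..x, β z)) := by
          simp only [hgdef, hGdef]; ring
  have claimB : ∀ x ∈ Ioo a r, ENNReal.ofReal (|r - x| * s' x)
      ≤ ENNReal.ofReal (3/2 * K) * ENNReal.ofReal |sb - s x| := by
    intro x hx
    rw [← ENNReal.ofReal_mul (by positivity)]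
    apply ENNReal.ofReal_le_ofReal
    rw [abs_of_nonneg (hpos0 x hx), hs' x (hsub' hx),
      abs_of_nonneg (by linarith [hx.2] : (0:ℝ) ≤ r - x)]
    have h := hlb x hx
    have h2 := mul_le_mul_of_nonneg_left h (by positivity : (0:ℝ) ≤ 3/2 * K)
    have h3 : 3/2 * K * (2/3 * K⁻¹ * (g x * (r - x))) = g x * (r - x) := by
      field_simp
    rw [h3] at h2
    calc (r - x) * Real.exp (∫ z in c..x, β z) = g x * (r - x) := by
          simp only [hgdef, hGdef]; ring
      _ ≤ 3/2 * K * (sb - s x) := h2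
  refine ⟨sb, hTend, ?_⟩
  constructor
  · intro h
    calc ∫⁻ x in Ioo a r, ENNReal.ofReal (|r - x| * s' x) ∂mSpeed
        ≤ ∫⁻ x in Ioo a r, ENNReal.ofReal (3/2 * K) * ENNReal.ofReal |sb - s x| ∂mSpeed :=
          setLIntegral_mono' measurableSet_Ioo claimB
      _ = ENNReal.ofReal (3/2 * K) * ∫⁻ x in Ioo a r, ENNReal.ofReal |sb - s x| ∂mSpeed :=
          lintegral_const_mul' _ _ ENNReal.ofReal_ne_top
      _ < ⊤ := ENNReal.mul_lt_top ENNReal.ofReal_lt_top h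
  · intro h
    calc ∫⁻ x in Ioo a r, ENNReal.ofReal |sb - s x| ∂mSpeed
        ≤ ∫⁻ x in Ioo a r, ENNReal.ofReal (2 * K) * ENNReal.ofReal (|r - x| * s' x) ∂mSpeed :=
          setLIntegral_mono' measurableSet_Ioo claimA
      _ = ENNReal.ofReal (2 * K) * ∫⁻ x in Ioo a r, ENNReal.ofReal (|r - x| * s' x) ∂mSpeed :=
          lintegral_const_mul' _ _ ENNReal.ofReal_ne_top
      _ < ⊤ := ENNReal.mul_lt_top ENNReal.ofReal_lt_top h

/-- Let `s(x) = ∫_c^x exp(∫_c^y β) dy` on `(l,r)` with `β²` locally integrable,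
`m` a speed measure on `(l,r)` (positive and finite on compact subintervals of the interior),
and `b ∈ {l,r}` finite with `∫_B |x − b| β(x)² dx < ∞` for an open interval `B` with endpoint
`b`.  Then `s(b)` is finite (limit `sb` exists), and `b` satisfies Feller's accessibility
criterion for the diffusion `Y` with scale `s` and speed `m` iff it satisfies it for the
natural-scale diffusion `Y*` with speed measure `s'·dm`:
`∫_B |s(b) − s(x)| dm(x) < ∞  ↔  ∫_B |b − x| s'(x) dm(x) < ∞`. -/
theorem stmt16 (l r c a b : ℝ) (hlr : l < r) (hc : c ∈ Ioo l r) (ha : a ∈ Ioo l r)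
    (β : ℝ → ℝ) (hβ : Measurable β)
    (hloc : LocallyIntegrableOn (fun x => (β x) ^ 2) (Ioo l r) volume)
    (s s' : ℝ → ℝ)
    (hs : ∀ x ∈ Ioo l r, s x = ∫ y in c..x, Real.exp (∫ z in c..y, β z))
    (hs' : ∀ x ∈ Ioo l r, s' x = Real.exp (∫ z in c..x, β z))
    (mSpeed : Measure ℝ)
    (hmSpeed : ∀ a' b' : ℝ, l < a' → a' ≤ b' → b' < r →
      0 < mSpeed (Icc a' b') ∧ mSpeed (Icc a' b') < ⊤)
    (B : Set ℝ)
    (hB : (b = l ∧ B = Ioo l a) ∨ (b = r ∧ B = Ioo a r))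
    (hgood : ∫⁻ x in B, ENNReal.ofReal (|x - b| * (β x) ^ 2) < ⊤) :
    ∃ sb : ℝ, Tendsto s (nhdsWithin b B) (nhds sb) ∧
      ((∫⁻ x in B, ENNReal.ofReal |sb - s x| ∂mSpeed < ⊤) ↔
        (∫⁻ x in B, ENNReal.ofReal (|b - x| * s' x) ∂mSpeed < ⊤)) := by
  have hβint : ∀ u v : ℝ, l < u → u ≤ v → v < r →
      IntegrableOn (fun z => (β z) ^ 2) (Icc u v) volume := fun u v hu huv hv =>
    hloc.integrableOn_compact_subset (Icc_subset_Ioo hu hv) isCompact_Icc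
  rcases hB with ⟨hbl, hBdef⟩ | ⟨hbr, hBdef⟩
  · -- left boundary: reflect
    subst hBdef
    subst b
    set β₂ : ℝ → ℝ := fun u => -β (-u) with hβ₂def
    set s₂ : ℝ → ℝ := fun x => -s (-x) with hs₂def
    set s₂' : ℝ → ℝ := fun x => s' (-x) with hs₂'def
    set m₂ : Measure ℝ := Measure.map Neg.neg mSpeed with hm₂def
    have hc₂ : -c ∈ Ioo (-r) (-l) := ⟨by linarith [hc.2], by linarith [hc.1]⟩
    have ha₂ : -a ∈ Ioo (-r) (-l) := ⟨by linarith [ha.2], by linarith [ha.1]⟩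
    have hβ₂m : Measurable β₂ := (hβ.comp measurable_neg).neg
    have hβint₂ : ∀ u v : ℝ, -r < u → u ≤ v → v < -l →
        IntegrableOn (fun z => (β₂ z) ^ 2) (Icc u v) volume := by
      intro u v hu huv hv
      have h := hβint (-v) (-u) (by linarith) (by linarith) (by linarith)
      have hpre : (Neg.neg : ℝ → ℝ) ⁻¹' (Icc u v) = Icc (-v) (-u) := by
        ext z
        simp only [mem_preimage, mem_Icc]
        constructor <;> (intro hz; constructor <;> linarith [hz.1, hz.2])
      have hmap : Measure.map Neg.neg (volume.restrict (Icc (-v) (-u)))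
          = volume.restrict (Icc u v) := by
        rw [← hpre, ← Measure.restrict_map measurable_neg measurableSet_Icc,
          Measure.map_neg_eq_self]
      rw [IntegrableOn, ← hmap,
        show Measure.map (Neg.neg : ℝ → ℝ) (volume.restrict (Icc (-v) (-u)))
          = Measure.map (MeasurableEquiv.neg ℝ) (volume.restrict (Icc (-v) (-u))) from rfl,
        integrable_map_equiv]
      have : ((fun z => (β₂ z) ^ 2) ∘ (MeasurableEquiv.neg ℝ)) = fun z => (β z) ^ 2 := by
        funext z
        simp [hβ₂def]
      rw [this]
      exact h
    have hinner : ∀ y : ℝ, (∫ z in (-c)..y, β₂ z) = ∫ z in c..(-y), β z := by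
      intro y
      simp only [hβ₂def]
      rw [intervalIntegral.integral_neg]
      rw [intervalIntegral.integral_comp_neg (a := -c) (b := y) β]
      rw [neg_neg, intervalIntegral.integral_symm]
      rw [neg_neg]
    have hs₂ : ∀ x ∈ Ioo (-r) (-l), s₂ x = ∫ y in (-c)..x, Real.exp (∫ z in (-c)..y, β₂ z) := by
      intro x hx
      have hxm : -x ∈ Ioo l r := ⟨by linarith [hx.2], by linarith [hx.1]⟩
      have h2 := intervalIntegral.integral_comp_neg (a := -c) (b := x)
        (fun y => Real.exp (∫ z in c..y, β z))
      calc s₂ x = -(∫ y in c..(-x), Real.exp (∫ z in c..y, β z)) := by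
            simp only [hs₂def]; rw [hs (-x) hxm]
        _ = ∫ y in (-c)..x, Real.exp (∫ z in c..(-y), β z) := by
            rw [h2, neg_neg, intervalIntegral.integral_symm, neg_neg]
        _ = ∫ y in (-c)..x, Real.exp (∫ z in (-c)..y, β₂ z) := by
            simp only [hinner]
    have hs₂' : ∀ x ∈ Ioo (-r) (-l), s₂' x = Real.exp (∫ z in (-c)..x, β₂ z) := by
      intro x hx
      have hxm : -x ∈ Ioo l r := ⟨by linarith [hx.2], by linarith [hx.1]⟩
      simp only [hs₂'def]
      rw [hs' (-x) hxm, hinner x]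
    have hgood₂ : ∫⁻ x in Ioo (-a) (-l), ENNReal.ofReal (|x - (-l)| * (β₂ x) ^ 2) < ⊤ := by
      have heq : ∫⁻ x in Ioo (-a) (-l), ENNReal.ofReal (|x - (-l)| * (β₂ x) ^ 2) ∂volume
          = ∫⁻ x in Ioo l a, ENNReal.ofReal (|x - l| * (β x) ^ 2) ∂volume := by
        conv_lhs => rw [show (volume : Measure ℝ) = Measure.map Neg.neg volume from
          (Measure.map_neg_eq_self volume).symm]
        rw [lint_neg_aux volume l a (fun t => ENNReal.ofReal (|t - (-l)| * (β₂ t) ^ 2))]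
        apply lintegral_congr
        intro x
        congr 1
        simp only [hβ₂def, neg_neg]
        rw [show |(-x) - (-l)| = |x - l| from by rw [← abs_neg]; ring_nf]
        ring
      rw [heq]
      exact hgood
    obtain ⟨sb₂, hT₂, hiff₂⟩ := aux16 (-r) (-l) (-c) (-a) hc₂ ha₂ β₂ hβ₂m hβint₂
      s₂ s₂' hs₂ hs₂' m₂ hgood₂
    refine ⟨-sb₂, ?_, ?_⟩
    · have hnegT : Tendsto (fun x : ℝ => -x) (nhdsWithin l (Ioo l a))
          (nhdsWithin (-l) (Ioo (-a) (-l))) := by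
        apply tendsto_nhdsWithin_of_tendsto_nhds_of_eventually_within
        · exact (continuous_neg.tendsto l).mono_left nhdsWithin_le_nhds
        · exact eventually_nhdsWithin_of_forall
            (fun x hx => ⟨by linarith [hx.2], by linarith [hx.1]⟩)
      have h := (hT₂.comp hnegT).neg
      simpa only [Function.comp_def, hs₂def, neg_neg] using h
    · have e1 : (∫⁻ x in Ioo (-a) (-l), ENNReal.ofReal |sb₂ - s₂ x| ∂m₂)
          = ∫⁻ x in Ioo l a, ENNReal.ofReal |(-sb₂) - s x| ∂mSpeed := by
        rw [hm₂def, lint_neg_aux mSpeed l a (fun t => ENNReal.ofReal |sb₂ - s₂ t|)]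
        apply lintegral_congr
        intro x
        simp only [hs₂def, neg_neg]
        rw [show |sb₂ - -s x| = |(-sb₂) - s x| from by rw [← abs_neg]; ring_nf]
      have e2 : (∫⁻ x in Ioo (-a) (-l), ENNReal.ofReal (|(-l) - x| * s₂' x) ∂m₂)
          = ∫⁻ x in Ioo l a, ENNReal.ofReal (|l - x| * s' x) ∂mSpeed := by
        rw [hm₂def, lint_neg_aux mSpeed l a (fun t => ENNReal.ofReal (|(-l) - t| * s₂' t))]
        apply lintegral_congr
        intro x
        simp only [hs₂'def, neg_neg]
        rw [show |(-l) - (-x)| = |l - x| from by rw [← abs_neg]; ring_nf]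
      rw [← e1, ← e2]
      exact hiff₂
  · -- right boundary: direct
    subst hBdef
    subst b
    exact aux16 l r c a hc ha β hβ hβint s s' hs hs' mSpeed hgood
end
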